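/- arXiv:2202.02396 — 8 statements merged into one kernel-verified Lean document; each statement's English description precedes it below -/
import Mathlib

section
/- Let X be a nonempty finite type, d : X → ℝ weights with d(x) > 0, φ : X → ℝ^{n_f} a feature map with span S and d-orthogonal projection Ψ onto S, and M a linear operator on X → ℝ with γ ∈ [0,1), κ ≥ 0 satisfying (i) ‖Ψ(M u)‖_d ≤ ‖u‖_d for all u ∈ S and (ii) ‖M v‖_d ≤ κ·‖v‖_d for all v. Let ϕ : X → ℝ^{m} be a second feature map, q : X → ℝ, and q̂ : X → ℝ with ‖q̂ − q‖_d ≤ ((1+γ·κ)/(1−γ))·ε, where ε = ⨅_{ω ∈ ℝ^{m}} ‖(x ↦ ⟪ϕ(x), ω⟫) − q‖_d. Let L : X → ℝ^{n_p} and b ≥ 0 with |L(x)_i| ≤ b for all x, i. Suppose ν : X → ℝ^{n_p} satisfies ν = γ·M(L ⊙ q) + γ·M ν (componentwise) and ν̂ : X → ℝ^{n_p} has every component in S and satisfies ν̂ = Ψ(γ·M(L ⊙ q̂) + γ·M ν̂) (componentwise). Then ‖ν̂ − ν‖_d ≤ γ·n_p·b·κ·((1+γ·κ)/(1−γ)²)·ε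 + ((1+γ·κ)/(1−γ))·⨅_{G ∈ ℝ^{n_f×n_p}} ‖(x ↦ Gᵀφ(x)) − ν‖_d. -/
/-!
For each component `k`, the error `e = ν̂ₖ - Ψ νₖ` lies in `S` and, by linearity, satisfies
`e = γ Ψ M ((q̂ - q) Lₖ) + γ Ψ M e + γ Ψ M (Ψ νₖ - νₖ)`. Condition (i) contracts the middle term
by `γ`, while `Ψ` is nonexpansive and (ii) bounds the other two, so
`(1 - γ) ‖e‖_d ≤ γ κ (b ‖q̂ - q‖_d + ‖Ψ νₖ - νₖ‖_d)`. Minkowski's inequality in `ℓ²` over the `n_p`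
components turns the constant part into a factor `√n_p ≤ n_p`, and since `Ψ νₖ` is the best
`d`-approximation of `νₖ` in `S`, the remaining part is bounded by the infimum over `G`.
-/

open Finset

theorem sqrt_sum_sq_le_of_le_add_mul {ι : Type*} [Fintype ι] {a r : ι → ℝ} {α C : ℝ}
    (hα : 0 ≤ α) (hC : 0 ≤ C) (ha : ∀ i, 0 ≤ a i) (h : ∀ i, a i ≤ α + C * r i) :
    √(∑ i, a i ^ 2) ≤ √(Fintype.card ι) * α + C * √(∑ i, r i ^ 2) := by
  have hnorm (v : ι → ℝ) : ‖(WithLp.toLp 2 v : EuclideanSpace ℝ ι)‖ = √(∑ i, v i ^ 2) := by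
    simp [EuclideanSpace.norm_eq]
  calc √(∑ i, a i ^ 2) ≤ √(∑ i, (α + C * r i) ^ 2) :=
        Real.sqrt_le_sqrt (sum_le_sum fun i _ => pow_le_pow_left₀ (ha i) (h i) 2)
    _ = ‖(WithLp.toLp 2 (fun _ : ι => α) + C • WithLp.toLp 2 r : EuclideanSpace ℝ ι)‖ :=
      (hnorm _).symm
    _ ≤ ‖(WithLp.toLp 2 (fun _ : ι => α) : EuclideanSpace ℝ ι)‖
        + C * ‖(WithLp.toLp 2 r : EuclideanSpace ℝ ι)‖ :=
      (norm_add_le _ _).trans_eq (by rw [norm_smul, Real.norm_of_nonneg hC])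
    _ = √(Fintype.card ι) * α + C * √(∑ i, r i ^ 2) := by
      rw [hnorm, hnorm, sum_const, card_univ, nsmul_eq_mul, Real.sqrt_mul (Nat.cast_nonneg _),
        Real.sqrt_sq hα]

theorem mem_range_mulVecLin_iff {X n : Type*} [Fintype n] {φ : X → n → ℝ} {u : X → ℝ} :
    u ∈ LinearMap.range (Matrix.of φ).mulVecLin ↔ ∃ h : n → ℝ, u = fun x => ∑ i, φ x i * h i :=
  LinearMap.mem_range.trans (exists_congr fun _ => eq_comm)

section WeightedNorm

variable {X : Type*} [Fintype X]

/-- The Euclidean norm of `x ↦ √(d x) * v x`; it is `‖v‖_d = √(∑ x, d x * v x ^ 2)` only when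
`0 ≤ d` (`weightedNorm_apply`). -/
noncomputable def weightedNorm (d : X → ℝ) : Seminorm ℝ (X → ℝ) :=
  (normSeminorm ℝ (EuclideanSpace ℝ X)).comp
    ((WithLp.linearEquiv 2 ℝ (X → ℝ)).symm.toLinearMap ∘ₗ
      LinearMap.pi fun x => √(d x) • LinearMap.proj x)

variable {d : X → ℝ}

theorem weightedNorm_apply (hd : ∀ x, 0 ≤ d x) (v : X → ℝ) :
    weightedNorm d v = √(∑ x, d x * v x ^ 2) := by
  simp [weightedNorm, EuclideanSpace.norm_eq, mul_pow, Real.sq_sqrt (hd _)]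

theorem weightedNorm_sq (hd : ∀ x, 0 ≤ d x) (v : X → ℝ) :
    weightedNorm d v ^ 2 = ∑ x, d x * v x ^ 2 := by
  rw [weightedNorm_apply hd, Real.sq_sqrt (sum_nonneg fun x _ => by have := hd x; positivity)]

theorem weightedNorm_add_sq_of_orthogonal (hd : ∀ x, 0 ≤ d x) {u v : X → ℝ}
    (huv : ∑ x, d x * u x * v x = 0) :
    weightedNorm d (u + v) ^ 2 = weightedNorm d u ^ 2 + weightedNorm d v ^ 2 := by
  have expand : ∑ x, d x * (u x + v x) ^ 2
      = ∑ x, (d x * u x ^ 2 + d x * v x ^ 2) + 2 * ∑ x, d x * u x * v x := by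
    rw [mul_sum, ← sum_add_distrib]
    exact sum_congr rfl fun x _ => by ring
  simp only [weightedNorm_sq hd, Pi.add_apply, expand, huv, sum_add_distrib]
  ring

theorem weightedNorm_mul_le (hd : ∀ x, 0 ≤ d x) {g : X → ℝ} {b : ℝ} (hb : 0 ≤ b)
    (hg : ∀ x, |g x| ≤ b) (v : X → ℝ) :
    weightedNorm d (fun x => v x * g x) ≤ b * weightedNorm d v := by
  rw [weightedNorm_apply hd, weightedNorm_apply hd, ← Real.sqrt_sq hb,
    ← Real.sqrt_mul (sq_nonneg b), mul_sum]
  refine Real.sqrt_le_sqrt (sum_le_sum fun x _ => ?_)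
  calc d x * (v x * g x) ^ 2 = d x * v x ^ 2 * g x ^ 2 := by ring
    _ ≤ d x * v x ^ 2 * b ^ 2 :=
      mul_le_mul_of_nonneg_left (sq_le_sq' (abs_le.mp (hg x)).1 (abs_le.mp (hg x)).2)
        (mul_nonneg (hd x) (sq_nonneg _))
    _ = b ^ 2 * (d x * v x ^ 2) := by ring

theorem sqrt_sum_mul_sum_sq_eq {ι : Type*} [Fintype ι] (hd : ∀ x, 0 ≤ d x)
    (F : X → ι → ℝ) :
    √(∑ x, d x * ∑ k, F x k ^ 2) = √(∑ k, weightedNorm d (fun x => F x k) ^ 2) := by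
  simp only [weightedNorm_sq hd, mul_sum]
  rw [sum_comm]

end WeightedNorm

section Projection

variable {X : Type*} [Fintype X] {d : X → ℝ}

structure IsWeightedOrthogonalProjection (d : X → ℝ) (S : Submodule ℝ (X → ℝ))
    (Ψ : (X → ℝ) →ₗ[ℝ] (X → ℝ)) : Prop where
  mem : ∀ v, Ψ v ∈ S
  orthogonal : ∀ v, ∀ s ∈ S, ∑ x, d x * (v x - Ψ v x) * s x = 0

namespace IsWeightedOrthogonalProjection

variable {S : Submodule ℝ (X → ℝ)} {Ψ : (X → ℝ) →ₗ[ℝ] (X → ℝ)}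

theorem weightedNorm_sub_sq (hΨ : IsWeightedOrthogonalProjection d S Ψ) (hd : ∀ x, 0 ≤ d x)
    (v : X → ℝ) {s : X → ℝ} (hs : s ∈ S) :
    weightedNorm d (s - v) ^ 2 = weightedNorm d (s - Ψ v) ^ 2 + weightedNorm d (Ψ v - v) ^ 2 := by
  rw [← weightedNorm_add_sq_of_orthogonal hd, sub_add_sub_cancel]
  rw [← neg_eq_zero, ← hΨ.orthogonal v _ (sub_mem hs (hΨ.mem v)), ← sum_neg_distrib]
  exact sum_congr rfl fun x _ => by simp only [Pi.sub_apply]; ring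

theorem weightedNorm_sub_le (hΨ : IsWeightedOrthogonalProjection d S Ψ) (hd : ∀ x, 0 ≤ d x)
    (v : X → ℝ) {s : X → ℝ} (hs : s ∈ S) :
    weightedNorm d (Ψ v - v) ≤ weightedNorm d (s - v) := by
  refine (pow_le_pow_iff_left₀ (apply_nonneg _ _) (apply_nonneg _ _) two_ne_zero).mp ?_
  rw [hΨ.weightedNorm_sub_sq hd v hs]
  exact le_add_of_nonneg_left (sq_nonneg _)

theorem weightedNorm_le (hΨ : IsWeightedOrthogonalProjection d S Ψ) (hd : ∀ x, 0 ≤ d x)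
    (v : X → ℝ) : weightedNorm d (Ψ v) ≤ weightedNorm d v := by
  refine (pow_le_pow_iff_left₀ (apply_nonneg _ _) (apply_nonneg _ _) two_ne_zero).mp ?_
  have h := hΨ.weightedNorm_sub_sq hd v S.zero_mem
  simp only [zero_sub, map_neg_eq_map] at h
  rw [h]
  exact le_add_of_nonneg_right (sq_nonneg _)

theorem weightedNorm_fixedPoint_sub_le (hΨ : IsWeightedOrthogonalProjection d S Ψ)
    (hd : ∀ x, 0 ≤ d x) {M : (X → ℝ) →ₗ[ℝ] (X → ℝ)} {γ κ : ℝ} (hγ0 : 0 ≤ γ) (hγ1 : γ < 1)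
    (hi : ∀ u ∈ S, weightedNorm d (Ψ (M u)) ≤ weightedNorm d u)
    (hii : ∀ v, weightedNorm d (M v) ≤ κ * weightedNorm d v)
    {f fhat y yhat : X → ℝ} (hy : y = γ • M f + γ • M y) (hyhat_mem : yhat ∈ S)
    (hyhat : yhat = Ψ (γ • M fhat + γ • M yhat)) :
    weightedNorm d (yhat - y)
      ≤ γ * κ / (1 - γ) * weightedNorm d (fhat - f)
        + (1 + γ * κ) / (1 - γ) * weightedNorm d (Ψ y - y) := by
  set e := yhat - Ψ y
  set r := Ψ y - y
  have he_mem : e ∈ S := sub_mem hyhat_mem (hΨ.mem y)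
  have he : e = γ • Ψ (M (fhat - f)) + γ • Ψ (M e) + γ • Ψ (M r) := by
    have hΨy : Ψ y = γ • Ψ (M f) + γ • Ψ (M y) := by
      conv_lhs => rw [hy]
      simp only [map_add, map_smul]
    have hΨyhat : yhat = γ • Ψ (M fhat) + γ • Ψ (M yhat) :=
      hyhat.trans (by simp only [map_add, map_smul])
    simp only [e, r, map_sub]
    linear_combination (norm := module) hΨyhat - hΨy
  have hΨM : ∀ w, weightedNorm d (Ψ (M w)) ≤ κ * weightedNorm d w := fun w =>
    (hΨ.weightedNorm_le hd _).trans (hii w)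
  have he_le : weightedNorm d e
      ≤ γ * (κ * weightedNorm d (fhat - f)) + γ * weightedNorm d e
        + γ * (κ * weightedNorm d r) := by
    calc weightedNorm d e
        ≤ weightedNorm d (γ • Ψ (M (fhat - f))) + weightedNorm d (γ • Ψ (M e))
          + weightedNorm d (γ • Ψ (M r)) := by
          conv_lhs => rw [he]
          exact (map_add_le_add _ _ _).trans (add_le_add_left (map_add_le_add _ _ _) _)
      _ ≤ _ := by
        simp only [map_smul_eq_mul, Real.norm_of_nonneg hγ0]
        gcongr
        exacts [hΨM _, hi e he_mem, hΨM _]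
  have hsplit : weightedNorm d (yhat - y) ≤ weightedNorm d e + weightedNorm d r := by
    simpa [e, r] using map_add_le_add (weightedNorm d) e r
  have h1γ : 0 < 1 - γ := by linarith
  rw [div_mul_eq_mul_div, div_mul_eq_mul_div, ← add_div, le_div_iff₀ h1γ]
  nlinarith [mul_le_mul_of_nonneg_left hsplit h1γ.le,
    mul_nonneg hγ0 (apply_nonneg (weightedNorm d) r)]

theorem weightedNorm_fixedPoint_mul_sub_le (hΨ : IsWeightedOrthogonalProjection d S Ψ)
    (hd : ∀ x, 0 ≤ d x) {M : (X → ℝ) →ₗ[ℝ] (X → ℝ)} {γ κ : ℝ} (hγ0 : 0 ≤ γ) (hγ1 : γ < 1)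
    (hi : ∀ u ∈ S, weightedNorm d (Ψ (M u)) ≤ weightedNorm d u)
    (hii : ∀ v, weightedNorm d (M v) ≤ κ * weightedNorm d v) (hκ : 0 ≤ κ)
    {g : X → ℝ} {b : ℝ} (hb : 0 ≤ b) (hg : ∀ x, |g x| ≤ b)
    {q qhat y yhat : X → ℝ} (hy : y = γ • M (fun x => q x * g x) + γ • M y)
    (hyhat_mem : yhat ∈ S) (hyhat : yhat = Ψ (γ • M (fun x => qhat x * g x) + γ • M yhat)) :
    weightedNorm d (yhat - y)
      ≤ γ * κ * b / (1 - γ) * weightedNorm d (qhat - q)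
        + (1 + γ * κ) / (1 - γ) * weightedNorm d (Ψ y - y) := by
  have h1γ : 0 < 1 - γ := by linarith
  have hdiff : (fun x => qhat x * g x) - (fun x => q x * g x) = fun x => (qhat - q) x * g x := by
    ext x
    simp only [Pi.sub_apply]
    ring
  refine (hΨ.weightedNorm_fixedPoint_sub_le hd hγ0 hγ1 hi hii hy hyhat_mem hyhat).trans ?_
  rw [hdiff]
  gcongr ?_ + _
  calc γ * κ / (1 - γ) * weightedNorm d (fun x => (qhat - q) x * g x)
      ≤ γ * κ / (1 - γ) * (b * weightedNorm d (qhat - q)) :=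
        mul_le_mul_of_nonneg_left (weightedNorm_mul_le hd hb hg _)
          (div_nonneg (mul_nonneg hγ0 hκ) h1γ.le)
    _ = γ * κ * b / (1 - γ) * weightedNorm d (qhat - q) := by ring

theorem sqrt_sum_weightedNorm_sub_sq_le {ι : Type*} [Fintype ι]
    (hΨ : IsWeightedOrthogonalProjection d S Ψ) (hd : ∀ x, 0 ≤ d x) (y s : X → ι → ℝ)
    (hs : ∀ k, (fun x => s x k) ∈ S) :
    √(∑ k, weightedNorm d (Ψ (fun x => y x k) - fun x => y x k) ^ 2)
      ≤ √(∑ x, d x * ∑ k, (s x k - y x k) ^ 2) := by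
  rw [sqrt_sum_mul_sum_sq_eq hd (fun x k => s x k - y x k)]
  exact Real.sqrt_le_sqrt (sum_le_sum fun k _ =>
    pow_le_pow_left₀ (apply_nonneg _ _) (hΨ.weightedNorm_sub_le hd _ (hs k)) 2)

end IsWeightedOrthogonalProjection

end Projection

theorem stmt_0_general {X : Type*} [Fintype X] {n_f m n_p : ℕ}
    (d : X → ℝ) (hd : ∀ x, 0 < d x)
    (φ : X → Fin n_f → ℝ)
    (Ψ M : (X → ℝ) →ₗ[ℝ] (X → ℝ))
    -- Ψ maps into the span S of the features
    (hΨmem : ∀ v : X → ℝ, ∃ h : Fin n_f → ℝ, Ψ v = fun x => ∑ i, φ x i * h i)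
    -- v - Ψ v is d-orthogonal to S : Ψ is the d-orthogonal projection onto S
    (hΨorth : ∀ (v : X → ℝ) (h : Fin n_f → ℝ),
      ∑ x, d x * (v x - Ψ v x) * (∑ i, φ x i * h i) = 0)
    (γ κ : ℝ) (hγ0 : 0 ≤ γ) (hγ1 : γ < 1) (hκ : 0 ≤ κ)
    -- (i) ‖Ψ (M u)‖_d ≤ ‖u‖_d for all u ∈ S
    (hi : ∀ u : X → ℝ, (∃ h : Fin n_f → ℝ, u = fun x => ∑ i, φ x i * h i) →
      Real.sqrt (∑ x, d x * (Ψ (M u) x) ^ 2) ≤ Real.sqrt (∑ x, d x * (u x) ^ 2))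
    -- (ii) ‖M v‖_d ≤ κ·‖v‖_d for all v
    (hii : ∀ v : X → ℝ,
      Real.sqrt (∑ x, d x * (M v x) ^ 2) ≤ κ * Real.sqrt (∑ x, d x * (v x) ^ 2))
    -- second feature map, true Q function q and its TD approximation q̂
    (ϕ : X → Fin m → ℝ) (q qhat : X → ℝ)
    (hqhat : Real.sqrt (∑ x, d x * (qhat x - q x) ^ 2)
      ≤ ((1 + γ * κ) / (1 - γ)) *
          ⨅ ω : Fin m → ℝ, Real.sqrt (∑ x, d x * ((∑ i, ϕ x i * ω i) - q x) ^ 2))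
    (L : X → Fin n_p → ℝ) (b : ℝ) (hb0 : 0 ≤ b)
    (hLb : ∀ x i, |L x i| ≤ b)
    (ν νhat : X → Fin n_p → ℝ)
    -- ν = γ·M(L ⊙ q) + γ·M ν componentwise
    (hν : ∀ k : Fin n_p, (fun x => ν x k)
      = γ • M (fun x => q x * L x k) + γ • M (fun x => ν x k))
    -- every component of ν̂ lies in S
    (hνhatmem : ∀ k : Fin n_p, ∃ h : Fin n_f → ℝ,
      (fun x => νhat x k) = fun x => ∑ i, φ x i * h i)
    -- ν̂ = Ψ(γ·M(L ⊙ q̂) + γ·M ν̂) componentwise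
    (hνhat : ∀ k : Fin n_p, (fun x => νhat x k)
      = Ψ (γ • M (fun x => qhat x * L x k) + γ • M (fun x => νhat x k))) :
    Real.sqrt (∑ x, d x * ∑ k, (νhat x k - ν x k) ^ 2)
      ≤ γ * n_p * b * κ * ((1 + γ * κ) / (1 - γ) ^ 2) *
          (⨅ ω : Fin m → ℝ, Real.sqrt (∑ x, d x * ((∑ i, ϕ x i * ω i) - q x) ^ 2))
        + ((1 + γ * κ) / (1 - γ)) *
            ⨅ G : Matrix (Fin n_f) (Fin n_p) ℝ,
              Real.sqrt (∑ x, d x * ∑ k, ((∑ i, G i k * φ x i) - ν x k) ^ 2) := by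
  have hd' : ∀ x, 0 ≤ d x := fun x => (hd x).le
  have hΨ : IsWeightedOrthogonalProjection d (LinearMap.range (Matrix.of φ).mulVecLin) Ψ :=
    ⟨fun v => mem_range_mulVecLin_iff.mpr (hΨmem v), fun v s hs => by
      obtain ⟨h, rfl⟩ := mem_range_mulVecLin_iff.mp hs
      exact hΨorth v h⟩
  set ε := ⨅ ω : Fin m → ℝ, Real.sqrt (∑ x, d x * ((∑ i, ϕ x i * ω i) - q x) ^ 2)
  simp only [← weightedNorm_apply hd'] at hi hii hqhat
  set C := (1 + γ * κ) / (1 - γ)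
  have h1γ : 0 < 1 - γ := by linarith
  have hcomp : ∀ k, weightedNorm d (fun x => νhat x k - ν x k)
      ≤ γ * κ * b / (1 - γ) * (C * ε)
        + C * weightedNorm d (Ψ (fun x => ν x k) - fun x => ν x k) := fun k =>
    (hΨ.weightedNorm_fixedPoint_mul_sub_le hd' hγ0 hγ1
      (fun u hu => hi u (mem_range_mulVecLin_iff.mp hu)) hii hκ hb0 (hLb · k) (hν k)
      (mem_range_mulVecLin_iff.mpr (hνhatmem k)) (hνhat k)).trans
      (add_le_add_left (mul_le_mul_of_nonneg_left hqhat (by positivity)) _)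
  have hbest : √(∑ k, weightedNorm d (Ψ (fun x => ν x k) - fun x => ν x k) ^ 2)
      ≤ ⨅ G : Matrix (Fin n_f) (Fin n_p) ℝ,
          √(∑ x, d x * ∑ k, ((∑ i, G i k * φ x i) - ν x k) ^ 2) := le_ciInf fun G =>
    hΨ.sqrt_sum_weightedNorm_sub_sq_le hd' ν _ fun k =>
      mem_range_mulVecLin_iff.mpr ⟨fun i => G i k, by ext x; simp [mul_comm]⟩
  have hsqrt : √(n_p : ℝ) ≤ n_p := Real.sqrt_le_self_iff.mpr <|
    (Nat.eq_zero_or_pos n_p).imp (by simp [·]) (Nat.one_le_cast.mpr ·)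
  have hε : 0 ≤ ε := Real.iInf_nonneg fun _ => Real.sqrt_nonneg _
  rw [sqrt_sum_mul_sum_sq_eq hd' (fun x k => νhat x k - ν x k)]
  calc _ ≤ √(Fintype.card (Fin n_p)) * (γ * κ * b / (1 - γ) * (C * ε))
        + C * √(∑ k, weightedNorm d (Ψ (fun x => ν x k) - fun x => ν x k) ^ 2) :=
        sqrt_sum_sq_le_of_le_add_mul (by positivity) (by positivity)
          (fun _ => apply_nonneg _ _) hcomp
    _ ≤ n_p * (γ * κ * b / (1 - γ) * (C * ε)) + C * ⨅ G : Matrix (Fin n_f) (Fin n_p) ℝ,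
          √(∑ x, d x * ∑ k, ((∑ i, G i k * φ x i) - ν x k) ^ 2) := by
      rw [Fintype.card_fin]
      gcongr
    _ = _ := by
      simp only [C]
      field_simp

/-- Theorem GLS: error bound for the least-squares TD gradient critic. -/
theorem stmt_0 {X : Type*} [Fintype X] [Nonempty X] {n_f m n_p : ℕ}
    (d : X → ℝ) (hd : ∀ x, 0 < d x)
    (φ : X → Fin n_f → ℝ)
    (Ψ M : (X → ℝ) →ₗ[ℝ] (X → ℝ))
    -- Ψ maps into the span S of the features
    (hΨmem : ∀ v : X → ℝ, ∃ h : Fin n_f → ℝ, Ψ v = fun x => ∑ i, φ x i * h i)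
    -- v - Ψ v is d-orthogonal to S : Ψ is the d-orthogonal projection onto S
    (hΨorth : ∀ (v : X → ℝ) (h : Fin n_f → ℝ),
      ∑ x, d x * (v x - Ψ v x) * (∑ i, φ x i * h i) = 0)
    (γ κ : ℝ) (hγ0 : 0 ≤ γ) (hγ1 : γ < 1) (hκ : 0 ≤ κ)
    -- (i) ‖Ψ (M u)‖_d ≤ ‖u‖_d for all u ∈ S
    (hi : ∀ u : X → ℝ, (∃ h : Fin n_f → ℝ, u = fun x => ∑ i, φ x i * h i) →
      Real.sqrt (∑ x, d x * (Ψ (M u) x) ^ 2) ≤ Real.sqrt (∑ x, d x * (u x) ^ 2))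
    -- (ii) ‖M v‖_d ≤ κ·‖v‖_d for all v
    (hii : ∀ v : X → ℝ,
      Real.sqrt (∑ x, d x * (M v x) ^ 2) ≤ κ * Real.sqrt (∑ x, d x * (v x) ^ 2))
    -- second feature map, true Q function q and its TD approximation q̂
    (ϕ : X → Fin m → ℝ) (q qhat : X → ℝ)
    (hqhat : Real.sqrt (∑ x, d x * (qhat x - q x) ^ 2)
      ≤ ((1 + γ * κ) / (1 - γ)) *
          ⨅ ω : Fin m → ℝ, Real.sqrt (∑ x, d x * ((∑ i, ϕ x i * ω i) - q x) ^ 2))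
    (L : X → Fin n_p → ℝ) (b : ℝ) (hb0 : 0 ≤ b)
    (hLb : ∀ x i, |L x i| ≤ b)
    (ν νhat : X → Fin n_p → ℝ)
    -- ν = γ·M(L ⊙ q) + γ·M ν componentwise
    (hν : ∀ k : Fin n_p, (fun x => ν x k)
      = γ • M (fun x => q x * L x k) + γ • M (fun x => ν x k))
    -- every component of ν̂ lies in S
    (hνhatmem : ∀ k : Fin n_p, ∃ h : Fin n_f → ℝ,
      (fun x => νhat x k) = fun x => ∑ i, φ x i * h i)
    -- ν̂ = Ψ(γ·M(L ⊙ q̂) + γ·M ν̂) componentwise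
    (hνhat : ∀ k : Fin n_p, (fun x => νhat x k)
      = Ψ (γ • M (fun x => qhat x * L x k) + γ • M (fun x => νhat x k))) :
    Real.sqrt (∑ x, d x * ∑ k, (νhat x k - ν x k) ^ 2)
      ≤ γ * n_p * b * κ * ((1 + γ * κ) / (1 - γ) ^ 2) *
          (⨅ ω : Fin m → ℝ, Real.sqrt (∑ x, d x * ((∑ i, ϕ x i * ω i) - q x) ^ 2))
        + ((1 + γ * κ) / (1 - γ)) *
            ⨅ G : Matrix (Fin n_f) (Fin n_p) ℝ,
              Real.sqrt (∑ x, d x * ∑ k, ((∑ i, G i k * φ x i) - ν x k) ^ 2) :=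
  stmt_0_general d hd φ Ψ M hΨmem hΨorth γ κ hγ0 hγ1 hκ hi hii ϕ q qhat hqhat L b hb0 hLb ν νhat hν
    hνhatmem hνhat
end

section
/- Let X be a nonempty finite type, d : X → ℝ weights with d(x) > 0, φ : X → ℝ^{n_f} a feature map with span S and d-orthogonal projection Ψ onto S, and M a linear operator on X → ℝ with γ ∈ [0,1), κ ≥ 0 satisfying (i) ‖Ψ(M u)‖_d ≤ ‖u‖_d for all u ∈ S and (ii) ‖M v‖_d ≤ κ·‖v‖_d for all v. Suppose F : X → ℝ^K satisfies F = C + γ·M F (componentwise) for some C : X → ℝ^K, and F̂ : X → ℝ^K has every component in S and satisfies F̂ = Ψ(C + γ·M F̂) (componentwise). Then ‖F̂ − F‖_d ≤ ((1+γ·κ)/(1−γ))·⨅_{G ∈ ℝ^{n_f×K}} ‖(x ↦ Gᵀφ(x)) − F‖_d. -/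
open Finset
open scoped InnerProductSpace

/-!
Work componentwise. For one component f = C + γ M f with Galerkin solution f̂ ∈ S,
subtracting Ψ f = Ψ (C + γ M f) from f̂ = Ψ (C + γ M f̂) gives
f̂ - Ψ f = γ Ψ M (f̂ - Ψ f) + γ Ψ M (Ψ f - f). Since f̂ - Ψ f ∈ S, (i) bounds the first term by
‖f̂ - Ψ f‖_d, and (ii) together with ‖Ψ‖ ≤ 1 bounds the second by κ ‖Ψ f - f‖_d; hence
(1 - γ) ‖f̂ - Ψ f‖_d ≤ γ κ ‖Ψ f - f‖_d, and the triangle inequality gives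
‖f̂ - f‖_d ≤ (1 + γ κ) / (1 - γ) · ‖Ψ f - f‖_d. Since Ψ f is the best approximation of f in S,
summing the squares over the components bounds ‖F̂ - F‖_d by (1 + γ κ) / (1 - γ) times the error
of every linear approximation Gᵀφ of F.

The d-norm is handled as ‖e u‖ for the linear map e u = (√(d x) · u x)ₓ into Euclidean space, so
the projection estimates hold for any linear map into an inner product space.
-/

section OrthogonalProjection

variable {V E : Type*} [AddCommGroup V] [Module ℝ V] [NormedAddCommGroup E] [InnerProductSpace ℝ E] (e : V →ₗ[ℝ] E)
  {S : Submodule ℝ V} {Ψ : V →ₗ[ℝ] V}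

theorem norm_le_norm_add_of_inner_eq_zero {x y : E} (h : ⟪x, y⟫_ℝ = 0) : ‖y‖ ≤ ‖x + y‖ := by
  have := norm_add_sq_eq_norm_sq_add_norm_sq_real h
  nlinarith [norm_nonneg y, norm_nonneg (x + y), mul_self_nonneg ‖x‖]

theorem norm_map_proj_le (hΨorth : ∀ v, ∀ s ∈ S, ⟪e (v - Ψ v), e s⟫_ℝ = 0)
    (hΨS : ∀ v, Ψ v ∈ S) (v : V) : ‖e (Ψ v)‖ ≤ ‖e v‖ := by
  simpa using norm_le_norm_add_of_inner_eq_zero (hΨorth v (Ψ v) (hΨS v))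

theorem norm_map_proj_sub_le (hΨorth : ∀ v, ∀ s ∈ S, ⟪e (v - Ψ v), e s⟫_ℝ = 0)
    (hΨS : ∀ v, Ψ v ∈ S) (f : V) {s : V} (hs : s ∈ S) : ‖e (Ψ f - f)‖ ≤ ‖e (s - f)‖ := by
  have horth : ⟪e (s - Ψ f), e (Ψ f - f)⟫_ℝ = 0 := by
    rw [real_inner_comm, ← neg_sub, map_neg, inner_neg_left,
      hΨorth f _ (S.sub_mem hs (hΨS f)), neg_zero]
  simpa using norm_le_norm_add_of_inner_eq_zero horth

end OrthogonalProjection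

theorem norm_galerkin_sub_le {V E : Type*} [AddCommGroup V] [Module ℝ V]
    [SeminormedAddCommGroup E] [NormedSpace ℝ E] (e : V →ₗ[ℝ] E) {S : Submodule ℝ V}
    {Ψ M : V →ₗ[ℝ] V} {γ κ : ℝ} (hγ0 : 0 ≤ γ) (hγ1 : γ < 1)
    (hΨS : ∀ v, Ψ v ∈ S) (hΨM : ∀ u ∈ S, ‖e (Ψ (M u))‖ ≤ ‖e u‖)
    (hΨMκ : ∀ v, ‖e (Ψ (M v))‖ ≤ κ * ‖e v‖) {f fhat c : V} (hf : f = c + γ • M f)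
    (hfhatS : fhat ∈ S) (hfhat : fhat = Ψ (c + γ • M fhat)) :
    ‖e (fhat - f)‖ ≤ (1 + γ * κ) / (1 - γ) * ‖e (Ψ f - f)‖ := by
  set a := ‖e (fhat - Ψ f)‖
  set b := ‖e (Ψ f - f)‖
  have hsplit : fhat - Ψ f = γ • (Ψ (M (fhat - Ψ f)) + Ψ (M (Ψ f - f))) := by
    rw [← map_add, ← map_add, sub_add_sub_cancel, ← map_smul, ← map_smul]
    conv_lhs => rw [hfhat, hf]
    rw [← map_sub, add_sub_add_left_eq_sub, ← smul_sub, ← map_sub, map_smul M]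
  have ha : a ≤ γ * (a + κ * b) := by
    calc a = γ * ‖e (Ψ (M (fhat - Ψ f))) + e (Ψ (M (Ψ f - f)))‖ := by
          rw [← map_add, ← norm_smul_of_nonneg hγ0, ← map_smul, ← hsplit]
      _ ≤ γ * (a + κ * b) := by
          gcongr
          exact (norm_add_le _ _).trans
            (add_le_add (hΨM _ (S.sub_mem hfhatS (hΨS f))) (hΨMκ _))
  have htri : ‖e (fhat - f)‖ ≤ a + b := by
    have := norm_add_le (e (fhat - Ψ f)) (e (Ψ f - f))
    rwa [← map_add, sub_add_sub_cancel] at this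
  rw [div_mul_eq_mul_div, le_div_iff₀ (by linarith)]
  nlinarith [norm_nonneg (e (fhat - Ψ f)), norm_nonneg (e (Ψ f - f))]

theorem sqrt_sum_sq_le_mul_sqrt_sum_sq {ι : Type*} [Fintype ι] {a b : ι → ℝ} {c : ℝ}
    (hc : 0 ≤ c) (ha : ∀ k, 0 ≤ a k) (hab : ∀ k, a k ≤ c * b k) :
    √(∑ k, a k ^ 2) ≤ c * √(∑ k, b k ^ 2) := by
  rw [← Real.sqrt_sq hc, ← Real.sqrt_mul (sq_nonneg c), mul_sum]
  gcongr with k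
  rw [← mul_pow]
  exact pow_le_pow_left₀ (ha k) (hab k) 2

section Weighted

variable {X : Type*}

noncomputable def weightedEmbedding (d : X → ℝ) : (X → ℝ) →ₗ[ℝ] EuclideanSpace ℝ X :=
  (WithLp.linearEquiv 2 ℝ (X → ℝ)).symm.toLinearMap ∘ₗ
    LinearMap.pi fun x => √(d x) • LinearMap.proj x

@[simp]
theorem weightedEmbedding_apply (d : X → ℝ) (u : X → ℝ) (x : X) :
    weightedEmbedding d u x = √(d x) * u x := rfl

variable [Fintype X] {d : X → ℝ}

theorem norm_weightedEmbedding (hd : ∀ x, 0 ≤ d x) (u : X → ℝ) :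
    ‖weightedEmbedding d u‖ = √(∑ x, d x * u x ^ 2) := by
  simp [EuclideanSpace.norm_eq, mul_pow, Real.sq_sqrt (hd _)]

theorem inner_weightedEmbedding (hd : ∀ x, 0 ≤ d x) (u v : X → ℝ) :
    ⟪weightedEmbedding d u, weightedEmbedding d v⟫_ℝ = ∑ x, d x * u x * v x := by
  simp only [PiLp.inner_apply, weightedEmbedding_apply, RCLike.inner_apply, conj_trivial]
  refine sum_congr rfl fun x _ => ?_
  linear_combination (u x * v x) * Real.mul_self_sqrt (hd x)

theorem sum_mul_sum_sq_eq_sum_sq_norm_weightedEmbedding {ι : Type*} [Fintype ι]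
    (hd : ∀ x, 0 ≤ d x) (G : X → ι → ℝ) :
    ∑ x, d x * ∑ k, G x k ^ 2 = ∑ k, ‖weightedEmbedding d fun x => G x k‖ ^ 2 := by
  simp only [norm_weightedEmbedding hd, Real.sq_sqrt (sum_nonneg fun x _ =>
    mul_nonneg (hd x) (sq_nonneg _)), mul_sum]
  exact sum_comm

end Weighted

theorem mem_range_mulVecLin_of_iff {X ι : Type*} [Fintype ι] (φ : X → ι → ℝ) {u : X → ℝ} :
    u ∈ LinearMap.range (Matrix.of φ).mulVecLin ↔ ∃ h : ι → ℝ, u = fun x => ∑ i, φ x i * h i := by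
  simp only [LinearMap.mem_range, eq_comm (a := u)]
  rfl

theorem stmt_1_general {X : Type*} [Fintype X] {n_f K : ℕ}
    (d : X → ℝ) (hd : ∀ x, 0 < d x)
    (φ : X → Fin n_f → ℝ)
    (Ψ M : (X → ℝ) →ₗ[ℝ] (X → ℝ))
    -- Ψ maps into the span S of the features
    (hΨmem : ∀ v : X → ℝ, ∃ h : Fin n_f → ℝ, Ψ v = fun x => ∑ i, φ x i * h i)
    -- v - Ψ v is d-orthogonal to S : Ψ is the d-orthogonal projection onto S
    (hΨorth : ∀ (v : X → ℝ) (h : Fin n_f → ℝ),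
      ∑ x, d x * (v x - Ψ v x) * (∑ i, φ x i * h i) = 0)
    (γ κ : ℝ) (hγ0 : 0 ≤ γ) (hγ1 : γ < 1) (hκ : 0 ≤ κ)
    -- (i) ‖Ψ (M u)‖_d ≤ ‖u‖_d for all u ∈ S
    (hi : ∀ u : X → ℝ, (∃ h : Fin n_f → ℝ, u = fun x => ∑ i, φ x i * h i) →
      Real.sqrt (∑ x, d x * (Ψ (M u) x) ^ 2) ≤ Real.sqrt (∑ x, d x * (u x) ^ 2))
    -- (ii) ‖M v‖_d ≤ κ·‖v‖_d for all v
    (hii : ∀ v : X → ℝ,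
      Real.sqrt (∑ x, d x * (M v x) ^ 2) ≤ κ * Real.sqrt (∑ x, d x * (v x) ^ 2))
    (F Fhat C : X → Fin K → ℝ)
    -- F = C + γ·M F componentwise
    (hF : ∀ k : Fin K, (fun x => F x k) = (fun x => C x k) + γ • M (fun x => F x k))
    -- every component of F̂ lies in S
    (hFhatmem : ∀ k : Fin K, ∃ h : Fin n_f → ℝ,
      (fun x => Fhat x k) = fun x => ∑ i, φ x i * h i)
    -- F̂ = Ψ (C + γ·M F̂) componentwise
    (hFhat : ∀ k : Fin K, (fun x => Fhat x k)
      = Ψ ((fun x => C x k) + γ • M (fun x => Fhat x k))) :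
    Real.sqrt (∑ x, d x * ∑ k, (Fhat x k - F x k) ^ 2)
      ≤ ((1 + γ * κ) / (1 - γ)) *
          ⨅ G : Matrix (Fin n_f) (Fin K) ℝ,
            Real.sqrt (∑ x, d x * ∑ k, ((∑ i, G i k * φ x i) - F x k) ^ 2) := by
  have hd' : ∀ x, 0 ≤ d x := fun x => (hd x).le
  set e := weightedEmbedding d
  set S := LinearMap.range (Matrix.of φ).mulVecLin
  have hΨS : ∀ v, Ψ v ∈ S := fun v => (mem_range_mulVecLin_of_iff φ).2 (hΨmem v)
  have hΨorth' : ∀ v, ∀ s ∈ S, ⟪e (v - Ψ v), e s⟫_ℝ = 0 := by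
    intro v s hs
    obtain ⟨h, rfl⟩ := (mem_range_mulVecLin_of_iff φ).1 hs
    rw [inner_weightedEmbedding hd']
    exact hΨorth v h
  have hΨM : ∀ u ∈ S, ‖e (Ψ (M u))‖ ≤ ‖e u‖ := fun u hu => by
    simpa only [e, norm_weightedEmbedding hd'] using hi u ((mem_range_mulVecLin_of_iff φ).1 hu)
  have hΨMκ : ∀ v, ‖e (Ψ (M v))‖ ≤ κ * ‖e v‖ := fun v =>
    (norm_map_proj_le e hΨorth' hΨS _).trans (by
      simpa only [e, norm_weightedEmbedding hd'] using hii v)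
  have hc : 0 ≤ (1 + γ * κ) / (1 - γ) := div_nonneg (by positivity) (by linarith)
  have hcomp : ∀ k, ‖e ((fun x => Fhat x k) - fun x => F x k)‖
      ≤ (1 + γ * κ) / (1 - γ) * ‖e (Ψ (fun x => F x k) - fun x => F x k)‖ := fun k =>
    norm_galerkin_sub_le e hγ0 hγ1 hΨS hΨM hΨMκ (hF k)
      ((mem_range_mulVecLin_of_iff φ).2 (hFhatmem k)) (hFhat k)
  rw [sum_mul_sum_sq_eq_sum_sq_norm_weightedEmbedding hd']
  refine (sqrt_sum_sq_le_mul_sqrt_sum_sq hc (fun k => norm_nonneg _) hcomp).trans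
    (mul_le_mul_of_nonneg_left (le_ciInf fun G => ?_) hc)
  rw [sum_mul_sum_sq_eq_sum_sq_norm_weightedEmbedding hd']
  have hGS : ∀ k, (fun x => ∑ i, G i k * φ x i) ∈ S := fun k =>
    (mem_range_mulVecLin_of_iff φ).2 ⟨fun i => G i k, by simp only [mul_comm]⟩
  gcongr with k
  exact norm_map_proj_sub_le e hΨorth' hΨS _ (hGS k)

/-- Generalized least-squares temporal-difference error bound (vector-valued
Bellman equations, Eq. (kolter-vectorial) in the paper). -/
theorem stmt_1 {X : Type*} [Fintype X] [Nonempty X] {n_f K : ℕ}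
    (d : X → ℝ) (hd : ∀ x, 0 < d x)
    (φ : X → Fin n_f → ℝ)
    (Ψ M : (X → ℝ) →ₗ[ℝ] (X → ℝ))
    -- Ψ maps into the span S of the features
    (hΨmem : ∀ v : X → ℝ, ∃ h : Fin n_f → ℝ, Ψ v = fun x => ∑ i, φ x i * h i)
    -- v - Ψ v is d-orthogonal to S : Ψ is the d-orthogonal projection onto S
    (hΨorth : ∀ (v : X → ℝ) (h : Fin n_f → ℝ),
      ∑ x, d x * (v x - Ψ v x) * (∑ i, φ x i * h i) = 0)
    (γ κ : ℝ) (hγ0 : 0 ≤ γ) (hγ1 : γ < 1) (hκ : 0 ≤ κ)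
    -- (i) ‖Ψ (M u)‖_d ≤ ‖u‖_d for all u ∈ S
    (hi : ∀ u : X → ℝ, (∃ h : Fin n_f → ℝ, u = fun x => ∑ i, φ x i * h i) →
      Real.sqrt (∑ x, d x * (Ψ (M u) x) ^ 2) ≤ Real.sqrt (∑ x, d x * (u x) ^ 2))
    -- (ii) ‖M v‖_d ≤ κ·‖v‖_d for all v
    (hii : ∀ v : X → ℝ,
      Real.sqrt (∑ x, d x * (M v x) ^ 2) ≤ κ * Real.sqrt (∑ x, d x * (v x) ^ 2))
    (F Fhat C : X → Fin K → ℝ)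
    -- F = C + γ·M F componentwise
    (hF : ∀ k : Fin K, (fun x => F x k) = (fun x => C x k) + γ • M (fun x => F x k))
    -- every component of F̂ lies in S
    (hFhatmem : ∀ k : Fin K, ∃ h : Fin n_f → ℝ,
      (fun x => Fhat x k) = fun x => ∑ i, φ x i * h i)
    -- F̂ = Ψ (C + γ·M F̂) componentwise
    (hFhat : ∀ k : Fin K, (fun x => Fhat x k)
      = Ψ ((fun x => C x k) + γ • M (fun x => Fhat x k))) :
    Real.sqrt (∑ x, d x * ∑ k, (Fhat x k - F x k) ^ 2)
      ≤ ((1 + γ * κ) / (1 - γ)) *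
          ⨅ G : Matrix (Fin n_f) (Fin K) ℝ,
            Real.sqrt (∑ x, d x * ∑ k, ((∑ i, G i k * φ x i) - F x k) ^ 2) :=
  stmt_1_general d hd φ Ψ M hΨmem hΨorth γ κ hγ0 hγ1 hκ hi hii F Fhat C hF hFhatmem hFhat
end

section
/- Let X be a nonempty finite type, g : X → X → ℝ a row-stochastic kernel, γ ∈ [0,1), r : X → ℝ, and Q : X → ℝ a function satisfying the Bellman equation Q(x) = r(x) + γ·∑_{x'} g(x'|x)·Q(x') for all x. Let φ : X → ℝ^{n_f} and define ξ(x) = φ(x) − γ·∑_{x'} g(x'|x)·φ(x'). Assume there exists ω* ∈ ℝ^{n_f} with ⟪ξ(x), ω*⟫ = r(x) for all x (perfect features). Let ζ : X → ℝ and assume the matrix A = ∑_{x} ζ(x)·φ(x)·ξ(x)ᵀ ∈ ℝ^{n_f×n_f} is invertible, and set ω_TD = A⁻¹·(∑_{x} ζ(x)·r(x)·φ(x)). Then ⟪φ(x), ω_TD⟫ = Q(x) for every x ∈ X. -/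
/-!
Perfect features make `ω*` a solution of the LSTD equation `A ω = b`, since
`A ω* = ∑ ζ(x) ⟪ξ(x), ω*⟫ φ(x) = ∑ ζ(x) r(x) φ(x) = b`; invertibility of `A` forces `ω_TD = ω*`.
Expanding `ξ`, the value function `x ↦ ⟪φ(x), ω*⟫` satisfies the Bellman equation, and the Bellman
equation has at most one solution because `γ P` is a sup-norm contraction.
-/

open Finset Matrix

section Bellman

variable {X : Type*} [Fintype X] {g : X → X → ℝ} {γ : ℝ}

/-- Evaluated at a point where `|h|` is maximal, the equation gives `|h| ≤ |γ| |h|`. -/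
theorem eq_zero_of_forall_eq_mul_sum (hg0 : ∀ x x', 0 ≤ g x x') (hg1 : ∀ x, ∑ x', g x x' = 1)
    (hγ : |γ| < 1) {h : X → ℝ} (hh : ∀ x, h x = γ * ∑ x', g x x' * h x') : h = 0 := by
  funext x
  obtain ⟨x₀, -, hmax⟩ := exists_max_image univ (fun x => |h x|) ⟨x, mem_univ x⟩
  have hmax' : ∀ x', |h x'| ≤ |h x₀| := fun x' => hmax x' (mem_univ x')
  have hcontr : |h x₀| ≤ |γ| * |h x₀| :=
    calc |h x₀| = |γ| * |∑ x', g x₀ x' * h x'| := by rw [hh x₀, abs_mul]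
      _ ≤ |γ| * ∑ x', g x₀ x' * |h x₀| := by
        gcongr
        refine (abs_sum_le_sum_abs _ _).trans (sum_le_sum fun x' _ => ?_)
        rw [abs_mul, abs_of_nonneg (hg0 x₀ x')]
        exact mul_le_mul_of_nonneg_left (hmax' x') (hg0 x₀ x')
      _ = |γ| * |h x₀| := by rw [← sum_mul, hg1 x₀, one_mul]
  have hx₀ : |h x₀| = 0 := by nlinarith [abs_nonneg (h x₀)]
  exact abs_eq_zero.mp (le_antisymm (hx₀ ▸ hmax' x) (abs_nonneg _))

theorem bellman_solution_unique (hg0 : ∀ x x', 0 ≤ g x x') (hg1 : ∀ x, ∑ x', g x x' = 1)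
    (hγ : |γ| < 1) {r Q₁ Q₂ : X → ℝ}
    (hQ₁ : ∀ x, Q₁ x = r x + γ * ∑ x', g x x' * Q₁ x')
    (hQ₂ : ∀ x, Q₂ x = r x + γ * ∑ x', g x x' * Q₂ x') : Q₁ = Q₂ := by
  have hdiff : Q₁ - Q₂ = 0 := eq_zero_of_forall_eq_mul_sum hg0 hg1 hγ fun x => by
    simp only [Pi.sub_apply, mul_sub, sum_sub_distrib]
    linarith [hQ₁ x, hQ₂ x]
  exact sub_eq_zero.mp hdiff

end Bellman

section Features

variable {X : Type*} [Fintype X] {n : Type*} [Fintype n]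

theorem sum_smul_vecMulVec_mulVec (ζ : X → ℝ) (u v : X → n → ℝ) (w : n → ℝ) :
    (∑ x, ζ x • vecMulVec (u x) (v x)) *ᵥ w = ∑ x, (ζ x * v x ⬝ᵥ w) • u x := by
  simp only [sum_mulVec, smul_mulVec, vecMulVec_mulVec, op_smul_eq_smul, smul_smul]

theorem dotProduct_eq_sub_mul_sum {g : X → X → ℝ} {γ : ℝ} {φ ξ : X → n → ℝ}
    (hξ : ∀ x i, ξ x i = φ x i - γ * ∑ x', g x x' * φ x' i) (w : n → ℝ) (x : X) :
    ξ x ⬝ᵥ w = φ x ⬝ᵥ w - γ * ∑ x', g x x' * (φ x' ⬝ᵥ w) := by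
  have hξx : ξ x = φ x - γ • ∑ x', g x x' • φ x' := by
    funext i
    simp [hξ]
  simp only [hξx, sub_dotProduct, smul_dotProduct, sum_dotProduct, smul_eq_mul]

end Features

theorem inv_mulVec_eq_of_mulVec_eq {n : Type*} [Fintype n] [DecidableEq n]
    {A : Matrix n n ℝ} (hA : IsUnit A) {w b : n → ℝ} (hw : A *ᵥ w = b) : A⁻¹ *ᵥ b = w := by
  rw [← hw, mulVec_mulVec, nonsing_inv_mul A ((isUnit_iff_isUnit_det A).mp hA), one_mulVec]

theorem stmt_2_general {X : Type*} [Fintype X] {n_f : ℕ}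
    (g : X → X → ℝ)  -- g x x' = g(x' | x)
    (hg0 : ∀ x x', 0 ≤ g x x') (hg1 : ∀ x, ∑ x', g x x' = 1)
    (γ : ℝ) (hγ0 : 0 ≤ γ) (hγ1 : γ < 1)
    (r Q : X → ℝ)
    (hQ : ∀ x, Q x = r x + γ * ∑ x', g x x' * Q x')
    (φ ξ : X → Fin n_f → ℝ)
    (hξ : ∀ x i, ξ x i = φ x i - γ * ∑ x', g x x' * φ x' i)
    (ωstar : Fin n_f → ℝ)
    (hωstar : ∀ x, ∑ i, ξ x i * ωstar i = r x)
    (ζ : X → ℝ)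
    (A : Matrix (Fin n_f) (Fin n_f) ℝ)
    (hA : A = ∑ x, ζ x • Matrix.vecMulVec (φ x) (ξ x))
    (hAinv : IsUnit A)
    (ωTD : Fin n_f → ℝ)
    (hωTD : ωTD = A⁻¹.mulVec (∑ x, (ζ x * r x) • φ x)) :
    ∀ x, ∑ i, φ x i * ωTD i = Q x := by
  have hωstar' : ∀ x, ξ x ⬝ᵥ ωstar = r x := hωstar
  have hTD : ωTD = ωstar := by
    rw [hωTD]
    refine inv_mulVec_eq_of_mulVec_eq hAinv ?_
    simp only [hA, sum_smul_vecMulVec_mulVec, hωstar']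
  have hbellman : ∀ x, φ x ⬝ᵥ ωstar = r x + γ * ∑ x', g x x' * (φ x' ⬝ᵥ ωstar) := fun x => by
    linarith [dotProduct_eq_sub_mul_sum hξ ωstar x, hωstar' x]
  have hγ : |γ| < 1 := by rwa [abs_of_nonneg hγ0]
  intro x
  rw [hTD]
  exact congrFun (bellman_solution_unique hg0 hg1 hγ hbellman hQ) x

/-- With perfect features, the LSTD solution recovers the exact Q-function. -/
theorem stmt_2 {X : Type*} [Fintype X] [Nonempty X] {n_f : ℕ}
    (g : X → X → ℝ)  -- g x x' = g(x' | x)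
    (hg0 : ∀ x x', 0 ≤ g x x') (hg1 : ∀ x, ∑ x', g x x' = 1)
    (γ : ℝ) (hγ0 : 0 ≤ γ) (hγ1 : γ < 1)
    (r Q : X → ℝ)
    (hQ : ∀ x, Q x = r x + γ * ∑ x', g x x' * Q x')
    (φ ξ : X → Fin n_f → ℝ)
    (hξ : ∀ x i, ξ x i = φ x i - γ * ∑ x', g x x' * φ x' i)
    (ωstar : Fin n_f → ℝ)
    (hωstar : ∀ x, ∑ i, ξ x i * ωstar i = r x)
    (ζ : X → ℝ)
    (A : Matrix (Fin n_f) (Fin n_f) ℝ)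
    (hA : A = ∑ x, ζ x • Matrix.vecMulVec (φ x) (ξ x))
    (hAinv : IsUnit A)
    (ωTD : Fin n_f → ℝ)
    (hωTD : ωTD = A⁻¹.mulVec (∑ x, (ζ x * r x) • φ x)) :
    ∀ x, ∑ i, φ x i * ωTD i = Q x :=
  stmt_2_general g hg0 hg1 γ hγ0 hγ1 r Q hQ φ ξ hξ ωstar hωstar ζ A hA hAinv ωTD hωTD
end

section
/- Let X be a nonempty finite type, U ⊆ ℝ^p open, and for each θ ∈ U let g_θ : X → X → ℝ be a row-stochastic kernel such that each entry θ ↦ g_θ(x'|x) is differentiable on U. Let γ ∈ [0,1), r : X → ℝ, and let Q_θ : X → ℝ be the unique solution of Q_θ(x) = r(x) + γ·∑_{x'} g_θ(x'|x)·Q_θ(x'). Let φ : X → ℝ^{n_f} (independent of θ) and ξ_θ(x) = φ(x) − γ·∑_{x'} g_θ(x'|x)·φ(x'). Assume that for every θ ∈ U there exists ω*(θ) ∈ ℝ^{n_f} with ⟪ξ_θ(x), ω*(θ)⟫ = r(x) for all x, and let ζ : X → ℝ be such that A(θ) = ∑_{x} ζ(x)·φ(x)·ξ_θ(x)ᵀ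 is invertible for all θ ∈ U; set ω_TD(θ) = A(θ)⁻¹·(∑_{x} ζ(x)·r(x)·φ(x)). Then θ ↦ ω_TD(θ) is differentiable on U, for each x the map θ ↦ Q_θ(x) is differentiable on U, and for all θ ∈ U, x ∈ X and k ∈ {1,…,p}: ∂Q_θ(x)/∂θ_k = ⟪φ(x), ∂ω_TD(θ)/∂θ_k⟫; i.e., the TD gradient critic Γ_TD(x) = φ(x)ᵀ·∇_θ ω_TD(θ) equals ∇_θ Q_θ(x). -/
/-! With perfect features the TD fixed point is exact: if `⟪ξ_θ(x), ω⟫ = r(x)` for all `x`, then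
`A(θ) ω = ∑ ζ r φ`, so `ω_TD(θ) = ω`, and `x ↦ ⟪φ(x), ω⟫` solves the Bellman equation. That
solution is unique because the Bellman operator is a `|γ|`-contraction for the sup norm, so
`Q_θ(x) = ⟪φ(x), ω_TD(θ)⟫` on the open set `U` and the gradients agree. By Cramer's rule the
coordinates of `ω_TD` are quotients of determinants whose entries are differentiable in `θ`. -/

open Finset Matrix

section Calculus

variable {𝕜 : Type*} [NontriviallyNormedField 𝕜] {E : Type*} [NormedAddCommGroup E]
  [NormedSpace 𝕜 E] {n : Type*} [Fintype n] {s : Set E}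

theorem fderiv_dotProduct_left_apply {f : E → n → 𝕜} {x : E} (hf : DifferentiableAt 𝕜 f x)
    (v : n → 𝕜) (u : E) : fderiv 𝕜 (fun y => v ⬝ᵥ f y) x u = v ⬝ᵥ fderiv 𝕜 f x u := by
  let L : (n → 𝕜) →L[𝕜] 𝕜 := ∑ i, v i • ContinuousLinearMap.proj i
  have hL : ∀ w, L w = v ⬝ᵥ w := fun w => by simp [L, dotProduct]
  have := (L.hasFDerivAt.comp x hf.hasFDerivAt).fderiv
  simp only [Function.comp_def, hL] at this
  rw [this, ContinuousLinearMap.comp_apply, hL]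

variable [DecidableEq n]

theorem DifferentiableOn.matrix_det {M : E → Matrix n n 𝕜}
    (hM : ∀ i j, DifferentiableOn 𝕜 (fun y => M y i j) s) :
    DifferentiableOn 𝕜 (fun y => (M y).det) s := by
  simp only [det_apply']
  refine .fun_sum fun σ _ => .const_mul (fun y hy => ?_) _
  exact (HasFDerivWithinAt.finsetProd fun i _ =>
    (hM (σ i) i y hy).hasFDerivWithinAt).differentiableWithinAt

theorem inv_mulVec_apply_eq_inv_det_mul_det_updateCol {M : Matrix n n 𝕜} (hM : M.det ≠ 0)
    (b : n → 𝕜) (i : n) : (M⁻¹ *ᵥ b) i = (M.det)⁻¹ * (M.updateCol i b).det := by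
  rw [← cramer_apply, ← det_smul_inv_mulVec_eq_cramer _ _ (isUnit_iff_ne_zero.mpr hM),
    Pi.smul_apply, smul_eq_mul, inv_mul_cancel_left₀ hM]

theorem DifferentiableOn.matrix_inv_mulVec {M : E → Matrix n n 𝕜}
    (hM : ∀ i j, DifferentiableOn 𝕜 (fun y => M y i j) s) (hdet : ∀ y ∈ s, (M y).det ≠ 0)
    (b : n → 𝕜) : DifferentiableOn 𝕜 (fun y => (M y)⁻¹ *ᵥ b) s := by
  refine differentiableOn_pi.mpr fun i => ?_
  refine DifferentiableOn.congr ?_ fun y hy =>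
    inv_mulVec_apply_eq_inv_det_mul_det_updateCol (hdet y hy) b i
  refine ((DifferentiableOn.matrix_det hM).inv hdet).mul (.matrix_det fun j k => ?_)
  rcases eq_or_ne k i with rfl | hk
  · simp
  · simpa [updateCol_ne hk] using hM j k

end Calculus

section Bellman

variable {X : Type*} [Fintype X]

theorem bellman_of_dotProduct_eq {R : Type*} [CommRing R] {n : Type*} [Fintype n]
    {P : X → X → R} {γ : R} {r : X → R} {φ : X → n → R} {ω : n → R}
    (hω : ∀ x, (φ x - γ • ∑ x', P x x' • φ x') ⬝ᵥ ω = r x) (x : X) :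
    φ x ⬝ᵥ ω = r x + γ * ∑ x', P x x' * (φ x' ⬝ᵥ ω) := by
  rw [← hω x, sub_dotProduct, smul_dotProduct, sum_dotProduct]
  simp [smul_dotProduct]

theorem bellman_unique {P : X → X → ℝ} (hP0 : ∀ x x', 0 ≤ P x x')
    (hP1 : ∀ x, ∑ x', P x x' ≤ 1) {γ : ℝ} (hγ : |γ| < 1) {r V W : X → ℝ}
    (hV : ∀ x, V x = r x + γ * ∑ x', P x x' * V x')
    (hW : ∀ x, W x = r x + γ * ∑ x', P x x' * W x') : V = W := by
  set d := V - W
  have hd : ∀ x, d x = γ * ∑ x', P x x' * d x' := fun x => by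
    simp only [d, Pi.sub_apply, hV x, hW x, mul_sub, sum_sub_distrib]; ring
  have hcontr : ‖d‖ ≤ |γ| * ‖d‖ := by
    refine pi_norm_le_iff_of_nonneg (by positivity) |>.mpr fun x => ?_
    calc ‖d x‖ = |γ| * |∑ x', P x x' * d x'| := by rw [hd x, Real.norm_eq_abs, abs_mul]
      _ ≤ |γ| * ∑ x', P x x' * ‖d‖ := by
        gcongr
        refine (abs_sum_le_sum_abs _ _).trans (sum_le_sum fun x' _ => ?_)
        rw [abs_mul, abs_of_nonneg (hP0 x x')]
        exact mul_le_mul_of_nonneg_left (norm_le_pi_norm d x') (hP0 x x')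
      _ ≤ |γ| * ‖d‖ := by
        rw [← sum_mul]
        exact mul_le_mul_of_nonneg_left (mul_le_of_le_one_left (norm_nonneg d) (hP1 x))
          (abs_nonneg γ)
  have : ‖d‖ = 0 := by nlinarith [norm_nonneg d]
  exact sub_eq_zero.mp (norm_eq_zero.mp this)

theorem inv_mulVec_eq_of_dotProduct_eq {R : Type*} [CommRing R] {n : Type*} [Fintype n]
    [DecidableEq n] {ζ r : X → R} {φ ξ : X → n → R} {ω : n → R}
    (hA : IsUnit (∑ x, ζ x • vecMulVec (φ x) (ξ x))) (hω : ∀ x, ξ x ⬝ᵥ ω = r x) :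
    (∑ x, ζ x • vecMulVec (φ x) (ξ x))⁻¹ *ᵥ ∑ x, (ζ x * r x) • φ x = ω := by
  have hAω : (∑ x, ζ x • vecMulVec (φ x) (ξ x)) *ᵥ ω = ∑ x, (ζ x * r x) • φ x := by
    simp [sum_mulVec, smul_mulVec, vecMulVec_mulVec, hω, mul_smul]
  rw [← hAω, mulVec_mulVec, nonsing_inv_mul _ ((isUnit_iff_isUnit_det _).mp hA), one_mulVec]

end Bellman

theorem stmt_3_general {X : Type*} [Fintype X] {n_f p : ℕ}
    (U : Set (Fin p → ℝ)) (hU : IsOpen U)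
    (g : (Fin p → ℝ) → X → X → ℝ)  -- g θ x x' = g_θ(x' | x)
    (hg0 : ∀ θ ∈ U, ∀ x x', 0 ≤ g θ x x')
    (hg1 : ∀ θ ∈ U, ∀ x, ∑ x', g θ x x' = 1)
    (hgdiff : ∀ x x', DifferentiableOn ℝ (fun θ => g θ x x') U)
    (γ : ℝ) (hγ0 : 0 ≤ γ) (hγ1 : γ < 1)
    (r : X → ℝ)
    (Q : (Fin p → ℝ) → X → ℝ)
    (hQ : ∀ θ ∈ U, ∀ x, Q θ x = r x + γ * ∑ x', g θ x x' * Q θ x')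
    (φ : X → Fin n_f → ℝ)
    (ξ : (Fin p → ℝ) → X → Fin n_f → ℝ)
    (hξ : ∀ θ x i, ξ θ x i = φ x i - γ * ∑ x', g θ x x' * φ x' i)
    (hperfect : ∀ θ ∈ U, ∃ ω : Fin n_f → ℝ, ∀ x, ∑ i, ξ θ x i * ω i = r x)
    (ζ : X → ℝ)
    (A : (Fin p → ℝ) → Matrix (Fin n_f) (Fin n_f) ℝ)
    (hA : ∀ θ, A θ = ∑ x, ζ x • Matrix.vecMulVec (φ x) (ξ θ x))
    (hAinv : ∀ θ ∈ U, IsUnit (A θ))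
    (ωTD : (Fin p → ℝ) → Fin n_f → ℝ)
    (hωTD : ∀ θ, ωTD θ = (A θ)⁻¹.mulVec (∑ x, (ζ x * r x) • φ x)) :
    DifferentiableOn ℝ ωTD U ∧
    (∀ x, DifferentiableOn ℝ (fun θ => Q θ x) U) ∧
    (∀ θ ∈ U, ∀ (x : X) (k : Fin p),
      fderiv ℝ (fun θ' => Q θ' x) θ (Pi.single k 1)
        = ∑ i, φ x i * fderiv ℝ ωTD θ (Pi.single k 1) i) := by
  have hξ_eq : ∀ θ x, ξ θ x = φ x - γ • ∑ x', g θ x x' • φ x' := fun θ x => by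
    ext i; simp [hξ]
  have hAdiff : ∀ i j, DifferentiableOn ℝ (fun θ => A θ i j) U := fun i j => by
    simp only [hA, hξ, Matrix.sum_apply, Matrix.smul_apply, Matrix.vecMulVec_apply, smul_eq_mul]
    fun_prop
  have hωdiff : DifferentiableOn ℝ ωTD U := by
    rw [funext hωTD]
    exact .matrix_inv_mulVec hAdiff
      (fun θ hθ => ((isUnit_iff_isUnit_det _).mp (hAinv θ hθ)).ne_zero) _
  have hQ_eq : ∀ θ ∈ U, ∀ x, Q θ x = φ x ⬝ᵥ ωTD θ := by
    intro θ hθ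
    obtain ⟨ω, hω⟩ := hperfect θ hθ
    have hωTD_eq : ωTD θ = ω := by
      rw [hωTD, hA]
      exact inv_mulVec_eq_of_dotProduct_eq (hA θ ▸ hAinv θ hθ) hω
    rw [hωTD_eq]
    refine congrFun (bellman_unique (hg0 θ hθ) (fun x => (hg1 θ hθ x).le)
      (abs_lt.mpr ⟨by linarith, hγ1⟩) (hQ θ hθ) (bellman_of_dotProduct_eq fun x => ?_))
    rw [← hξ_eq]
    exact hω x
  have hQdiff : ∀ x, DifferentiableOn ℝ (fun θ => Q θ x) U := fun x =>
    DifferentiableOn.congr (by simp only [dotProduct]; fun_prop) (hQ_eq · · x)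
  refine ⟨hωdiff, hQdiff, fun θ hθ x k => ?_⟩
  rw [(Filter.eventuallyEq_of_mem (hU.mem_nhds hθ) (hQ_eq · · x)).fderiv_eq]
  exact fderiv_dotProduct_left_apply (hωdiff.differentiableAt (hU.mem_nhds hθ)) _ _

/-- With perfect features, the TD gradient critic Γ_TD(x) = φ(x)ᵀ·∇_θ ω_TD(θ)
equals the true gradient ∇_θ Q_θ(x). -/
theorem stmt_3 {X : Type*} [Fintype X] [Nonempty X] {n_f p : ℕ}
    (U : Set (Fin p → ℝ)) (hU : IsOpen U)
    (g : (Fin p → ℝ) → X → X → ℝ)  -- g θ x x' = g_θ(x' | x)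
    (hg0 : ∀ θ ∈ U, ∀ x x', 0 ≤ g θ x x')
    (hg1 : ∀ θ ∈ U, ∀ x, ∑ x', g θ x x' = 1)
    (hgdiff : ∀ x x', DifferentiableOn ℝ (fun θ => g θ x x') U)
    (γ : ℝ) (hγ0 : 0 ≤ γ) (hγ1 : γ < 1)
    (r : X → ℝ)
    (Q : (Fin p → ℝ) → X → ℝ)
    (hQ : ∀ θ ∈ U, ∀ x, Q θ x = r x + γ * ∑ x', g θ x x' * Q θ x')
    (φ : X → Fin n_f → ℝ)
    (ξ : (Fin p → ℝ) → X → Fin n_f → ℝ)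
    (hξ : ∀ θ x i, ξ θ x i = φ x i - γ * ∑ x', g θ x x' * φ x' i)
    (hperfect : ∀ θ ∈ U, ∃ ω : Fin n_f → ℝ, ∀ x, ∑ i, ξ θ x i * ω i = r x)
    (ζ : X → ℝ)
    (A : (Fin p → ℝ) → Matrix (Fin n_f) (Fin n_f) ℝ)
    (hA : ∀ θ, A θ = ∑ x, ζ x • Matrix.vecMulVec (φ x) (ξ θ x))
    (hAinv : ∀ θ ∈ U, IsUnit (A θ))
    (ωTD : (Fin p → ℝ) → Fin n_f → ℝ)
    (hωTD : ∀ θ, ωTD θ = (A θ)⁻¹.mulVec (∑ x, (ζ x * r x) • φ x)) :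
    DifferentiableOn ℝ ωTD U ∧
    (∀ x, DifferentiableOn ℝ (fun θ => Q θ x) U) ∧
    (∀ θ ∈ U, ∀ (x : X) (k : Fin p),
      fderiv ℝ (fun θ' => Q θ' x) θ (Pi.single k 1)
        = ∑ i, φ x i * fderiv ℝ ωTD θ (Pi.single k 1) i) :=
  stmt_3_general U hU g hg0 hg1 hgdiff γ hγ0 hγ1 r Q hQ φ ξ hξ hperfect ζ A hA hAinv ωTD hωTD
end

section
/- Let X be a finite type, d : X → ℝ with d(x) ≥ 0, g : X → X → ℝ a row-stochastic kernel, γ ∈ [0,1), φ : X → ℝ^{n_f}, and c : X → ℝ^K. Assume the Gram matrix ∑_{x} d(x)·φ(x)·φ(x)ᵀ is invertible, so that for each H ∈ ℝ^{n_f×K} the projected update T(H) = argmin_{H'} ∑_{x} d(x)·‖H'ᵀφ(x) − c(x) − γ·∑_{x'} g(x'|x)·Hᵀφ(x')‖² is well defined. Then H ∈ ℝ^{n_f×K} is a fixed point of T if and only if A·H = B, where A = ∑_{x} d(x)·φ(x)·(φ(x) − γ·∑_{x'} g(x'|x)·φ(x'))ᵀ and B = ∑_{x} d(x)·φ(x)·c(x)ᵀ.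 In particular, if A is invertible, then H* = A⁻¹·B is the unique fixed point of T. -/
/-!
A fixed point `H` of the projected update is a minimiser of the weighted least-squares loss
`H' ↦ ‖Φ H' - Y‖²_d` for the target `Y = C + γ P Φ H` built from `H` itself, where `Φ`, `P`, `C`
are the matrices with rows `φ x`, `g x`, `c x`. This loss is a convex quadratic in `H'`: along the
line `H + s D` it equals `loss H + 2 s ⟪D, G⟫ + s² ‖Φ D‖²_d` with gradient `G = Φᵀ diag(d) (Φ H - Y)`.
Nonnegativity of this polynomial in `s` for `D = G` forces `⟪G, G⟫ = 0` (its discriminant), so the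
minimisers are exactly the solutions of the normal equations `G = 0`, and `G = A H - B`.
-/

open Matrix

section WeightedLeastSquares

variable {m n p : Type*} [Fintype m] [Fintype n] [Fintype p]

def weightedSqNorm (d : m → ℝ) (R : Matrix m p ℝ) : ℝ := ∑ x, d x * ∑ k, R x k ^ 2

theorem weightedSqNorm_nonneg {d : m → ℝ} (hd : ∀ x, 0 ≤ d x) (R : Matrix m p ℝ) :
    0 ≤ weightedSqNorm d R :=
  Finset.sum_nonneg fun x _ => mul_nonneg (hd x) (Finset.sum_nonneg fun _ _ => sq_nonneg _)

variable [DecidableEq m]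

theorem weightedSqNorm_eq_trace (d : m → ℝ) (R : Matrix m p ℝ) :
    weightedSqNorm d R = trace (Rᵀ * diagonal d * R) := by
  simp only [weightedSqNorm, trace, diag_apply, mul_apply, transpose_apply, diagonal_apply,
    mul_ite, mul_zero, Finset.sum_ite_eq', Finset.mem_univ, if_true, Finset.mul_sum]
  rw [Finset.sum_comm]
  exact Finset.sum_congr rfl fun x _ => Finset.sum_congr rfl fun k _ => by ring

theorem weightedSqNorm_add_smul (d : m → ℝ) (R S : Matrix m p ℝ) (s : ℝ) :
    weightedSqNorm d (R + s • S) =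
      weightedSqNorm d R + 2 * s * trace (Sᵀ * diagonal d * R) + s ^ 2 * weightedSqNorm d S := by
  have hsymm : trace (Rᵀ * diagonal d * S) = trace (Sᵀ * diagonal d * R) := by
    rw [← trace_transpose]
    simp [transpose_mul, Matrix.mul_assoc]
  simp only [weightedSqNorm_eq_trace, transpose_add, transpose_smul, Matrix.add_mul,
    Matrix.mul_add, Matrix.smul_mul, Matrix.mul_smul, trace_add, trace_smul, hsymm, smul_eq_mul]
  ring

theorem forall_weightedSqNorm_le_iff {d : m → ℝ} (hd : ∀ x, 0 ≤ d x) (Φ : Matrix m n ℝ)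
    (T : Matrix m p ℝ) (H : Matrix n p ℝ) :
    (∀ H' : Matrix n p ℝ, weightedSqNorm d (Φ * H - T) ≤ weightedSqNorm d (Φ * H' - T)) ↔
      Φᵀ * diagonal d * (Φ * H - T) = 0 := by
  set G := Φᵀ * diagonal d * (Φ * H - T)
  have expand : ∀ D s, weightedSqNorm d (Φ * (H + s • D) - T) =
      weightedSqNorm d (Φ * H - T) + 2 * s * trace (Dᵀ * G) + s ^ 2 * weightedSqNorm d (Φ * D) := by
    intro D s
    rw [Matrix.mul_add, Matrix.mul_smul, add_sub_right_comm, weightedSqNorm_add_smul]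
    simp only [G, transpose_mul, Matrix.mul_assoc]
  constructor
  · intro hmin
    have hquad : ∀ s : ℝ, 0 ≤ weightedSqNorm d (Φ * G) * (s * s) + 2 * trace (Gᵀ * G) * s + 0 := by
      intro s
      have hle := hmin (H + s • G)
      rw [expand] at hle
      nlinarith
    have hdisc := discrim_le_zero hquad
    rw [discrim] at hdisc
    have htr : trace (Gᵀ * G) = 0 := by nlinarith
    exact trace_conjTranspose_mul_self_eq_zero_iff.mp htr
  · intro hG H'
    have hH' := expand (H' - H) 1
    rw [one_smul, add_sub_cancel, hG] at hH'
    rw [hH']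
    simp only [Matrix.mul_zero, trace_zero, mul_zero, add_zero, one_pow, one_mul]
    exact le_add_of_nonneg_right (weightedSqNorm_nonneg hd _)

end WeightedLeastSquares

theorem sum_smul_vecMulVec_eq_transpose_mul_diagonal_mul {m n p : Type*} [Fintype m]
    [DecidableEq m] (d : m → ℝ) (u : m → n → ℝ) (v : m → p → ℝ) :
    ∑ x, d x • vecMulVec (u x) (v x) = (of u)ᵀ * diagonal d * of v := by
  ext i k
  simp only [Matrix.sum_apply, Matrix.smul_apply, vecMulVec_apply, smul_eq_mul, mul_apply,
    transpose_apply, of_apply, diagonal_apply, mul_ite, mul_zero, Finset.sum_ite_eq',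
    Finset.mem_univ, if_true]
  exact Finset.sum_congr rfl fun x _ => by ring

section ProjectedBellman

variable {m n p : Type*} [Fintype m] [Fintype n] [Fintype p]

theorem bellmanLoss_eq_weightedSqNorm (d : m → ℝ) (g : m → m → ℝ) (γ : ℝ) (φ : m → n → ℝ)
    (c : m → p → ℝ) (H H' : Matrix n p ℝ) :
    ∑ x, d x * ∑ k, ((∑ i, H' i k * φ x i) - c x k
        - γ * ∑ x', g x x' * ∑ i, H i k * φ x' i) ^ 2 =
      weightedSqNorm d (of φ * H' - (of c + γ • (of g * (of φ * H)))) := by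
  simp only [weightedSqNorm, Matrix.sub_apply, Matrix.add_apply, Matrix.smul_apply,
    Matrix.mul_apply, of_apply, smul_eq_mul, sub_sub, mul_comm (φ _ _)]

theorem forall_bellmanLoss_le_iff [DecidableEq m] {d : m → ℝ} (hd : ∀ x, 0 ≤ d x)
    (g : m → m → ℝ) (γ : ℝ) (φ : m → n → ℝ) (c : m → p → ℝ) (H : Matrix n p ℝ) :
    (∀ H' : Matrix n p ℝ,
      ∑ x, d x * ∑ k, ((∑ i, H i k * φ x i) - c x k
          - γ * ∑ x', g x x' * ∑ i, H i k * φ x' i) ^ 2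
        ≤ ∑ x, d x * ∑ k, ((∑ i, H' i k * φ x i) - c x k
          - γ * ∑ x', g x x' * ∑ i, H i k * φ x' i) ^ 2) ↔
      (of φ)ᵀ * diagonal d * (of φ - γ • (of g * of φ)) * H = (of φ)ᵀ * diagonal d * of c := by
  have normal_eq : (of φ)ᵀ * diagonal d * (of φ * H - (of c + γ • (of g * (of φ * H)))) =
      (of φ)ᵀ * diagonal d * (of φ - γ • (of g * of φ)) * H - (of φ)ᵀ * diagonal d * of c := by
    simp only [Matrix.mul_sub, Matrix.sub_mul, Matrix.mul_add, Matrix.mul_smul, Matrix.smul_mul,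
      Matrix.mul_assoc]
    abel
  simp only [bellmanLoss_eq_weightedSqNorm]
  rw [forall_weightedSqNorm_le_iff hd, normal_eq, sub_eq_zero]

end ProjectedBellman

theorem stmt_6_general {X : Type*} [Fintype X] {n_f K : ℕ}
    (d : X → ℝ) (hd : ∀ x, 0 ≤ d x)
    (g : X → X → ℝ)  -- g x x' = g(x' | x)
    (γ : ℝ)
    (φ : X → Fin n_f → ℝ) (c : X → Fin K → ℝ)
    (A : Matrix (Fin n_f) (Fin n_f) ℝ)
    (hA : A = ∑ x, d x • Matrix.vecMulVec (φ x)
      (fun i => φ x i - γ * ∑ x', g x x' * φ x' i))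
    (B : Matrix (Fin n_f) (Fin K) ℝ)
    (hB : B = ∑ x, d x • Matrix.vecMulVec (φ x) (c x)) :
    (∀ H : Matrix (Fin n_f) (Fin K) ℝ,
      -- H is a fixed point of the projected update T, i.e. H minimizes the
      -- weighted least-squares objective of the Bellman target built from H
      (∀ H' : Matrix (Fin n_f) (Fin K) ℝ,
        ∑ x, d x * ∑ k, ((∑ i, H i k * φ x i) - c x k
            - γ * ∑ x', g x x' * ∑ i, H i k * φ x' i) ^ 2
          ≤ ∑ x, d x * ∑ k, ((∑ i, H' i k * φ x i) - c x k
            - γ * ∑ x', g x x' * ∑ i, H i k * φ x' i) ^ 2)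
        ↔ A * H = B) ∧
    (IsUnit A →
      ∀ H : Matrix (Fin n_f) (Fin K) ℝ,
        (∀ H' : Matrix (Fin n_f) (Fin K) ℝ,
          ∑ x, d x * ∑ k, ((∑ i, H i k * φ x i) - c x k
              - γ * ∑ x', g x x' * ∑ i, H i k * φ x' i) ^ 2
            ≤ ∑ x, d x * ∑ k, ((∑ i, H' i k * φ x i) - c x k
              - γ * ∑ x', g x x' * ∑ i, H i k * φ x' i) ^ 2)
          ↔ H = A⁻¹ * B) := by
  classical
  have hA' : A = (of φ)ᵀ * diagonal d * (of φ - γ • (of g * of φ)) := by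
    rw [hA, sum_smul_vecMulVec_eq_transpose_mul_diagonal_mul]
    rfl
  have hB' : B = (of φ)ᵀ * diagonal d * of c := by
    rw [hB, sum_smul_vecMulVec_eq_transpose_mul_diagonal_mul]
  have fixed_iff (H : Matrix (Fin n_f) (Fin K) ℝ) :=
    hA' ▸ hB' ▸ forall_bellmanLoss_le_iff hd g γ φ c H
  refine ⟨fixed_iff, fun hA_unit H => (fixed_iff H).trans ?_⟩
  have hdet := (isUnit_iff_isUnit_det A).mp hA_unit
  constructor
  · rintro rfl
    exact (nonsing_inv_mul_cancel_left A H hdet).symm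
  · rintro rfl
    exact mul_nonsing_inv_cancel_left A B hdet

/-- The fixed points of the projected Bellman update are exactly the solutions
of A·H = B; if A is invertible, H* = A⁻¹·B is the unique fixed point. -/
theorem stmt_6 {X : Type*} [Fintype X] {n_f K : ℕ}
    (d : X → ℝ) (hd : ∀ x, 0 ≤ d x)
    (g : X → X → ℝ)  -- g x x' = g(x' | x)
    (hg0 : ∀ x x', 0 ≤ g x x') (hg1 : ∀ x, ∑ x', g x x' = 1)
    (γ : ℝ) (hγ0 : 0 ≤ γ) (hγ1 : γ < 1)
    (φ : X → Fin n_f → ℝ) (c : X → Fin K → ℝ)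
    (hGram : IsUnit (∑ x, d x • Matrix.vecMulVec (φ x) (φ x)))
    (A : Matrix (Fin n_f) (Fin n_f) ℝ)
    (hA : A = ∑ x, d x • Matrix.vecMulVec (φ x)
      (fun i => φ x i - γ * ∑ x', g x x' * φ x' i))
    (B : Matrix (Fin n_f) (Fin K) ℝ)
    (hB : B = ∑ x, d x • Matrix.vecMulVec (φ x) (c x)) :
    (∀ H : Matrix (Fin n_f) (Fin K) ℝ,
      -- H is a fixed point of the projected update T, i.e. H minimizes the
      -- weighted least-squares objective of the Bellman target built from H
      (∀ H' : Matrix (Fin n_f) (Fin K) ℝ,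
        ∑ x, d x * ∑ k, ((∑ i, H i k * φ x i) - c x k
            - γ * ∑ x', g x x' * ∑ i, H i k * φ x' i) ^ 2
          ≤ ∑ x, d x * ∑ k, ((∑ i, H' i k * φ x i) - c x k
            - γ * ∑ x', g x x' * ∑ i, H i k * φ x' i) ^ 2)
        ↔ A * H = B) ∧
    (IsUnit A →
      ∀ H : Matrix (Fin n_f) (Fin K) ℝ,
        (∀ H' : Matrix (Fin n_f) (Fin K) ℝ,
          ∑ x, d x * ∑ k, ((∑ i, H i k * φ x i) - c x k
              - γ * ∑ x', g x x' * ∑ i, H i k * φ x' i) ^ 2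
            ≤ ∑ x, d x * ∑ k, ((∑ i, H' i k * φ x i) - c x k
              - γ * ∑ x', g x x' * ∑ i, H i k * φ x' i) ^ 2)
          ↔ H = A⁻¹ * B) :=
  stmt_6_general d hd g γ φ c A hA B hB
end

section
/- Let V be a finite-dimensional real inner product space, S ⊆ V a subspace, and Ψ the orthogonal projection of V onto S. Let M : V → V be a linear map, γ ∈ [0,1) and κ ≥ 0 such that (i) ‖Ψ(M u)‖ ≤ ‖u‖ for every u ∈ S and (ii) ‖M v‖ ≤ κ·‖v‖ for every v ∈ V. Suppose f, c ∈ V satisfy f = c + γ·M f, and f̂ ∈ S satisfies f̂ = Ψ(c + γ·M f̂). Then ‖f̂ − f‖ ≤ ((1+γ·κ)/(1−γ))·‖Ψ f − f‖, and consequently ‖f̂ − f‖ ≤ ((1+γ·κ)/(1−γ))·⨅_{g ∈ S} ‖g − f‖. -/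
/-!
Subtracting the two fixed-point equations and projecting gives
`fhat - Ψ f = γ • Ψ (M (fhat - f))`. Splitting `fhat - f = (fhat - Ψ f) + (Ψ f - f)`, hypothesis (i)
controls the part in `S` and (ii) the rest, so `e = ‖fhat - Ψ f‖` satisfies
`e ≤ γ e + γ κ ‖Ψ f - f‖`; since `γ < 1` this bounds `e`, and the triangle inequality finishes.
The infimum form is the best-approximation property of `Ψ`.
-/

lemma add_le_div_mul_of_le_mul_add {x d γ κ : ℝ} (hγ0 : 0 ≤ γ) (hγ1 : γ < 1) (hd : 0 ≤ d)
    (h : x ≤ γ * x + γ * κ * d) : x + d ≤ (1 + γ * κ) / (1 - γ) * d := by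
  rw [div_mul_eq_mul_div, le_div_iff₀ (by linarith)]
  nlinarith [mul_nonneg hγ0 hd]

namespace Submodule

variable {V : Type*} [NormedAddCommGroup V] [InnerProductSpace ℝ V]
  (S : Submodule ℝ V) [S.HasOrthogonalProjection] {M : V →ₗ[ℝ] V} {γ κ : ℝ} {f c fhat : V}

theorem norm_orthogonalProjectionOnto_sub_eq_iInf (f : V) :
    ‖(S.orthogonalProjectionOnto f : V) - f‖ = ⨅ g : S, ‖(g : V) - f‖ := by
  rw [norm_sub_rev, ← starProjection_apply, starProjection_minimal]
  exact iInf_congr fun g ↦ norm_sub_rev _ _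

theorem projectedFixedPoint_sub_orthogonalProjectionOnto (hf : f = c + γ • M f)
    (hfhat : fhat = (S.orthogonalProjectionOnto (c + γ • M fhat) : V)) :
    fhat - (S.orthogonalProjectionOnto f : V) =
      γ • (S.orthogonalProjectionOnto (M (fhat - f)) : V) := by
  have hdiff : c + γ • M fhat - (c + γ • M f) = γ • M (fhat - f) := by
    rw [map_sub]; module
  calc fhat - (S.orthogonalProjectionOnto f : V)
      = S.orthogonalProjectionOnto (c + γ • M fhat) - S.orthogonalProjectionOnto (c + γ • M f) := by
        rw [← hfhat, ← hf]
    _ = γ • (S.orthogonalProjectionOnto (M (fhat - f)) : V) := by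
        rw [← Submodule.coe_sub, ← map_sub, hdiff, map_smul, Submodule.coe_smul]

theorem norm_projectedFixedPoint_sub_orthogonalProjectionOnto_le (hγ0 : 0 ≤ γ)
    (hi : ∀ u ∈ S, ‖(S.orthogonalProjectionOnto (M u) : V)‖ ≤ ‖u‖)
    (hii : ∀ v : V, ‖M v‖ ≤ κ * ‖v‖) (hf : f = c + γ • M f)
    (hfhat : fhat = (S.orthogonalProjectionOnto (c + γ • M fhat) : V)) :
    ‖fhat - (S.orthogonalProjectionOnto f : V)‖ ≤
      γ * ‖fhat - (S.orthogonalProjectionOnto f : V)‖ +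
        γ * κ * ‖(S.orthogonalProjectionOnto f : V) - f‖ := by
  have hkey := S.projectedFixedPoint_sub_orthogonalProjectionOnto hf hfhat
  set P := S.orthogonalProjectionOnto
  set e := fhat - (P f : V)
  set r := (P f : V) - f
  have he : e ∈ S := S.sub_mem (hfhat ▸ (P _).2) (P f).2
  have hsplit : fhat - f = e + r := by simp only [e, r]; abel
  have hr : ‖(P (M r) : V)‖ ≤ κ * ‖r‖ := (S.norm_orthogonalProjectionOnto_apply_le _).trans (hii r)
  calc ‖e‖ = γ * ‖(P (M (fhat - f)) : V)‖ := by rw [hkey, norm_smul, Real.norm_of_nonneg hγ0]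
    _ = γ * ‖(P (M e) : V) + (P (M r) : V)‖ := by rw [hsplit, map_add, map_add, Submodule.coe_add]
    _ ≤ γ * (‖e‖ + κ * ‖r‖) := by
        gcongr
        exact (norm_add_le _ _).trans (add_le_add (hi e he) hr)
    _ = γ * ‖e‖ + γ * κ * ‖r‖ := by ring

theorem norm_projectedFixedPoint_sub_le (hγ0 : 0 ≤ γ) (hγ1 : γ < 1)
    (hi : ∀ u ∈ S, ‖(S.orthogonalProjectionOnto (M u) : V)‖ ≤ ‖u‖)
    (hii : ∀ v : V, ‖M v‖ ≤ κ * ‖v‖) (hf : f = c + γ • M f)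
    (hfhat : fhat = (S.orthogonalProjectionOnto (c + γ • M fhat) : V)) :
    ‖fhat - f‖ ≤ (1 + γ * κ) / (1 - γ) * ‖(S.orthogonalProjectionOnto f : V) - f‖ :=
  calc ‖fhat - f‖
      ≤ ‖fhat - (S.orthogonalProjectionOnto f : V)‖ + ‖(S.orthogonalProjectionOnto f : V) - f‖ :=
        norm_sub_le_norm_sub_add_norm_sub _ _ _
    _ ≤ _ := add_le_div_mul_of_le_mul_add hγ0 hγ1 (norm_nonneg _)
        (S.norm_projectedFixedPoint_sub_orthogonalProjectionOnto_le hγ0 hi hii hf hfhat)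

end Submodule

theorem stmt_8_general {V : Type*} [NormedAddCommGroup V] [InnerProductSpace ℝ V]
    [FiniteDimensional ℝ V]
    (S : Submodule ℝ V) (M : V →ₗ[ℝ] V)
    (γ κ : ℝ) (hγ0 : 0 ≤ γ) (hγ1 : γ < 1)
    (hi : ∀ u ∈ S, ‖(Submodule.orthogonalProjectionOnto S (M u) : V)‖ ≤ ‖u‖)
    (hii : ∀ v : V, ‖M v‖ ≤ κ * ‖v‖)
    (f c fhat : V)
    (hf : f = c + γ • M f)
    (hfhat : fhat = (Submodule.orthogonalProjectionOnto S (c + γ • M fhat) : V)) :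
    ‖fhat - f‖ ≤ ((1 + γ * κ) / (1 - γ)) * ‖(Submodule.orthogonalProjectionOnto S f : V) - f‖ ∧
    ‖fhat - f‖ ≤ ((1 + γ * κ) / (1 - γ)) * ⨅ g : S, ‖(g : V) - f‖ := by
  have hbound := S.norm_projectedFixedPoint_sub_le hγ0 hγ1 hi hii hf hfhat
  exact ⟨hbound, S.norm_orthogonalProjectionOnto_sub_eq_iInf f ▸ hbound⟩

/-- Abstract quasi-optimality bound for projected fixed points (Kolter-style
bound in an inner product space). -/
theorem stmt_8 {V : Type*} [NormedAddCommGroup V] [InnerProductSpace ℝ V]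
    [FiniteDimensional ℝ V]
    (S : Submodule ℝ V) (M : V →ₗ[ℝ] V)
    (γ κ : ℝ) (hγ0 : 0 ≤ γ) (hγ1 : γ < 1) (hκ : 0 ≤ κ)
    (hi : ∀ u ∈ S, ‖(Submodule.orthogonalProjectionOnto S (M u) : V)‖ ≤ ‖u‖)
    (hii : ∀ v : V, ‖M v‖ ≤ κ * ‖v‖)
    (f c fhat : V)
    (hf : f = c + γ • M f)
    (hfhatS : fhat ∈ S)
    (hfhat : fhat = (Submodule.orthogonalProjectionOnto S (c + γ • M fhat) : V)) :
    ‖fhat - f‖ ≤ ((1 + γ * κ) / (1 - γ)) * ‖(Submodule.orthogonalProjectionOnto S f : V) - f‖ ∧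
    ‖fhat - f‖ ≤ ((1 + γ * κ) / (1 - γ)) * ⨅ g : S, ‖(g : V) - f‖ :=
  stmt_8_general S M γ κ hγ0 hγ1 hi hii f c fhat hf hfhat
end

section
/- Let M ∈ ℝ^{N×N} be a row-stochastic matrix, γ, λ ∈ [0,1), and C, ν ∈ ℝ^{N×K} with ν = γ·M·(C + ν). Then the series ∑_{n=0}^∞ λⁿ·γⁿ·Mⁿ·(C + (1−λ)·ν) converges and its sum equals C + ν. -/
/-! With `A = λγ M`, the row-stochastic `M` has `ℓ∞` operator norm at most `1`, so `‖A‖ < 1` and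
the Neumann series `∑ Aⁿ` converges to `(1 - A)⁻¹`. The fixed-point equation for `ν` says exactly
that `(1 - A) (C + ν) = C + (1 - λ) ν`, so the series sums to `C + ν`. -/

open Finset

attribute [local instance] Matrix.linftyOpNormedAddCommGroup
  Matrix.linftyOpNormedSpace Matrix.linftyOpNormedRing

namespace Matrix

theorem linfty_opNorm_le_one_of_mem_rowStochastic {n : Type*} [Fintype n] [DecidableEq n]
    {M : Matrix n n ℝ} (hM : M ∈ rowStochastic ℝ n) : ‖M‖ ≤ 1 := by
  have hrow (i : n) : ∑ j, ‖M i j‖₊ = 1 := by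
    ext
    simpa [Real.norm_of_nonneg (nonneg_of_mem_rowStochastic hM)] using
      sum_row_of_mem_rowStochastic hM i
  rw [linfty_opNorm_def]
  exact_mod_cast Finset.sup_le fun i _ => (hrow i).le

theorem hasSum_pow_mul_sub_mul {R m n : Type*} [NormedRing R] [CompleteSpace R]
    [Fintype m] [DecidableEq m] [Fintype n]
    {A : Matrix m m R} (hA : ‖A‖ < 1) (D : Matrix m n R) :
    HasSum (fun k => A ^ k * (D - A * D)) D := by
  -- instance search does not see that the `linfty` normed ring is complete
  have : HasSummableGeomSeries (Matrix m m R) := @instHasSummableGeomSeriesOfCompleteSpace _ _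
    (inferInstanceAs (CompleteSpace (m → m → R)))
  convert (summable_geometric_of_norm_lt_one hA).hasSum.map
    (addMonoidHomMulRight (D - A * D)) (continuous_id.matrix_mul continuous_const) using 1
  · rfl
  · rw [addMonoidHomMulRight_apply, show D - A * D = (1 - A) * D by
      rw [Matrix.sub_mul, Matrix.one_mul], ← Matrix.mul_assoc, geom_series_mul_neg A hA,
      Matrix.one_mul]

end Matrix

/-- Eligibility-trace (λ-return) form of the policy gradient in matrix
notation: the λ-weighted Neumann-type series recovers C + ν. -/
theorem stmt_14 {N K : ℕ}
    (M : Matrix (Fin N) (Fin N) ℝ)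
    (hM0 : ∀ i j, 0 ≤ M i j) (hM1 : ∀ i, ∑ j, M i j = 1)
    (γ lam : ℝ) (hγ0 : 0 ≤ γ) (hγ1 : γ < 1) (hlam0 : 0 ≤ lam) (hlam1 : lam < 1)
    (C ν : Matrix (Fin N) (Fin K) ℝ)
    (hν : ν = γ • (M * (C + ν))) :
    HasSum (fun n : ℕ => (lam ^ n * γ ^ n) • (M ^ n * (C + (1 - lam) • ν)))
      (C + ν) := by
  have hM : ‖M‖ ≤ 1 :=
    Matrix.linfty_opNorm_le_one_of_mem_rowStochastic
      (Matrix.mem_rowStochastic_iff_sum.2 ⟨hM0, hM1⟩)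
  have hq0 : 0 ≤ lam * γ := mul_nonneg hlam0 hγ0
  have hA : ‖(lam * γ) • M‖ < 1 := calc
    ‖(lam * γ) • M‖ = lam * γ * ‖M‖ := by rw [norm_smul, Real.norm_of_nonneg hq0]
    _ ≤ lam * γ := mul_le_of_le_one_right hq0 hM
    _ < 1 := (mul_le_of_le_one_right hlam0 hγ1.le).trans_lt hlam1
  have hstep : C + ν - ((lam * γ) • M) * (C + ν) = C + (1 - lam) • ν := by
    rw [Matrix.smul_mul, mul_smul, ← hν, sub_smul, one_smul]
    abel
  have hsum := Matrix.hasSum_pow_mul_sub_mul hA (C + ν)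
  rw [hstep] at hsum
  simpa only [smul_pow, Matrix.smul_mul, mul_pow] using hsum
end

section
/- Let E be a real Banach space, γ, λ ∈ [0,1), and (y_n)_{n≥0}, (z_n)_{n≥0} sequences in E that are bounded in norm. Then the series ∑_{n=0}^∞ λⁿ·(∑_{t=0}^{n} γᵗ·y_t + γⁿ·z_n) and ∑_{n=0}^∞ λⁿ·γⁿ·(y_n + (1−λ)·z_n) both converge, and (1−λ)·∑_{n=0}^∞ λⁿ·(∑_{t=0}^{n} γᵗ·y_t + γⁿ·z_n) = ∑_{n=0}^∞ λⁿ·γⁿ·(y_n + (1−λ)·z_n). -/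
/-!
The partial sums `∑_{t ≤ n} γ^t y_t` are bounded, so both series are dominated by geometric
series. The identity is Abel summation: shifting the index once,
`(1 - λ) ∑ λⁿ Pₙ = ∑ λⁿ (Pₙ - Pₙ₋₁) = ∑ λⁿ γⁿ yₙ` for `Pₙ = ∑_{t ≤ n} γ^t y_t`,
while the `z`-terms agree after factoring out `1 - λ`.
-/

open Finset

theorem HasSum.pow_smul_of_pow_smul_sum_range {R M : Type*} [Ring R] [AddCommGroup M]
    [Module R M] [TopologicalSpace M] [IsTopologicalAddGroup M] [ContinuousConstSMul R M]
    {r : R} {a : ℕ → M} {S : M}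
    (h : HasSum (fun n => r ^ n • ∑ t ∈ range (n + 1), a t) S) :
    HasSum (fun n => r ^ n • a n) ((1 - r) • S) := by
  set b : ℕ → M := fun n => r ^ n • ∑ t ∈ range (n + 1), a t
  have hshift : HasSum (fun n => b (n + 1)) (S - b 0) := by
    simpa using (hasSum_nat_add_iff' 1).mpr h
  have hstep : ∀ n, b (n + 1) - r • b n = r ^ (n + 1) • a (n + 1) := by
    intro n
    simp only [b, sum_range_succ _ (n + 1), smul_add, smul_smul, ← pow_succ']
    abel
  have htail := (hshift.sub (h.const_smul r)).congr_fun fun n => (hstep n).symm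
  rw [← hasSum_nat_add_iff' 1]
  convert htail using 1
  simp only [sub_smul, one_smul, range_one, sum_singleton, pow_zero, _root_.zero_add, b]
  abel

theorem summable_norm_pow_smul_of_bounded {E : Type*} [SeminormedAddCommGroup E] [NormedSpace ℝ E]
    {r : ℝ} (hr : |r| < 1) {x : ℕ → E} {C : ℝ} (hx : ∀ n, ‖x n‖ ≤ C) :
    Summable fun n => ‖r ^ n • x n‖ := by
  refine .of_nonneg_of_le (fun n => norm_nonneg _) (fun n => ?_)
    ((summable_geometric_of_lt_one (abs_nonneg r) hr).mul_right C)
  rw [norm_smul, Real.norm_eq_abs, abs_pow]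
  exact mul_le_mul_of_nonneg_left (hx n) (by positivity)

/-- λ-weighted average of the n-step policy-gradient expressions yields the
eligibility-trace form of the policy gradient. -/
theorem stmt_15 {E : Type*} [NormedAddCommGroup E] [NormedSpace ℝ E]
    [CompleteSpace E]
    (γ lam : ℝ) (hγ0 : 0 ≤ γ) (hγ1 : γ < 1) (hlam0 : 0 ≤ lam) (hlam1 : lam < 1)
    (y z : ℕ → E)
    (hy : ∃ Cy : ℝ, ∀ n, ‖y n‖ ≤ Cy) (hz : ∃ Cz : ℝ, ∀ n, ‖z n‖ ≤ Cz) :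
    Summable (fun n : ℕ =>
      lam ^ n • ((∑ t ∈ Finset.range (n + 1), γ ^ t • y t) + γ ^ n • z n)) ∧
    Summable (fun n : ℕ => (lam ^ n * γ ^ n) • (y n + (1 - lam) • z n)) ∧
    (1 - lam) • (∑' n : ℕ,
        lam ^ n • ((∑ t ∈ Finset.range (n + 1), γ ^ t • y t) + γ ^ n • z n))
      = ∑' n : ℕ, (lam ^ n * γ ^ n) • (y n + (1 - lam) • z n) := by
  obtain ⟨Cy, hCy⟩ := hy
  obtain ⟨Cz, hCz⟩ := hz
  have hγ : |γ| < 1 := abs_lt.mpr ⟨by linarith, hγ1⟩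
  have hlam : |lam| < 1 := abs_lt.mpr ⟨by linarith, hlam1⟩
  have hy_disc : Summable fun t => ‖γ ^ t • y t‖ := summable_norm_pow_smul_of_bounded hγ hCy
  have hpartial_le (n : ℕ) : ‖∑ t ∈ range (n + 1), γ ^ t • y t‖ ≤ ∑' t, ‖γ ^ t • y t‖ :=
    (norm_sum_le _ _).trans (hy_disc.sum_le_tsum _ fun _ _ => norm_nonneg _)
  have hz_disc_le (n : ℕ) : ‖γ ^ n • z n‖ ≤ Cz := by
    rw [norm_smul, norm_pow, Real.norm_eq_abs]
    exact (mul_le_of_le_one_left (norm_nonneg _) (pow_le_one₀ (abs_nonneg γ) hγ.le)).trans (hCz n)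
  obtain ⟨SP, hSP⟩ := (summable_norm_pow_smul_of_bounded hlam hpartial_le).of_norm
  obtain ⟨SZ, hSZ⟩ := (summable_norm_pow_smul_of_bounded hlam hz_disc_le).of_norm
  have hlhs : HasSum (fun n => lam ^ n • ((∑ t ∈ range (n + 1), γ ^ t • y t) + γ ^ n • z n))
      (SP + SZ) :=
    (hSP.add hSZ).congr_fun fun n => smul_add _ _ _
  have hrhs : HasSum (fun n => (lam ^ n * γ ^ n) • (y n + (1 - lam) • z n))
      ((1 - lam) • SP + (1 - lam) • SZ) :=
    (hSP.pow_smul_of_pow_smul_sum_range.add (hSZ.const_smul (1 - lam))).congr_fun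
      fun n => by module
  exact ⟨hlhs.summable, hrhs.summable, by rw [hlhs.tsum_eq, hrhs.tsum_eq, smul_add]⟩
end
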